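/- arXiv:2408.02459 — 9 statements merged into one kernel-verified Lean document; each statement's English description precedes it below -/
import Mathlib

section
/- Let Z be a measurable space, let P be a Markov (probability) transition kernel on Z, and for n ∈ ℕ let Pₙ denote the n-step kernel (the n-fold composition of P), with Pₙf(z) := ∫ f dPₙ(z,·) for measurable f : Z → [0,∞], integrals interpreted in [0,∞]. Let V : Z → [1,∞] be measurable, let α ∈ (0,1), C > 0 and T ∈ ℕ with T ≥ 1, and suppose that for every z ∈ Z there exists some n ∈ {1, …, T} such that PₙV(z) ≤ αⁿ·V(z) + C. Then the measurable function W := min_{1 ≤ n ≤ T} α^{−n}·PₙV satisfies the drift condition P₁W(z) ≤ α·W(z) + α^{−T}·C for every z ∈ Z. -/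
open MeasureTheory ProbabilityTheory ENNReal

/-!
Write `W = min_{1 ≤ n ≤ T} α⁻ⁿ Pₙ V` and let `m` be an index attaining the minimum at `z`.
If `m ≥ 2`, then `W ≤ α^{-(m-1)} P_{m-1} V` pointwise, and integrating against `P(z, ·)` gives
`P W (z) ≤ α^{-(m-1)} P_m V (z) = α W(z)`. If `m = 1`, the drift hypothesis at each point `y`
gives `W(y) ≤ V(y) + α^{-T} C`, so `P W (z) ≤ P V (z) + α^{-T} C = α W(z) + α^{-T} C`.
-/

namespace ENNReal

theorem inv_pow_mul_le_add_of_le_pow_mul_add {α x v C : ℝ≥0∞} {n T : ℕ} (hα0 : α ≠ 0)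
    (hα1 : α ≤ 1) (hnT : n ≤ T) (h : x ≤ α ^ n * v + C) :
    α⁻¹ ^ n * x ≤ v + α⁻¹ ^ T * C := by
  have hαtop : α ≠ ⊤ := ne_top_of_le_ne_top one_ne_top hα1
  calc α⁻¹ ^ n * x ≤ α⁻¹ ^ n * (α ^ n * v + C) := by gcongr
    _ = v + α⁻¹ ^ n * C := by
      rw [mul_add, ← mul_assoc, ← mul_pow, ENNReal.inv_mul_cancel hα0 hαtop, one_pow, one_mul]
    _ ≤ v + α⁻¹ ^ T * C := by
      gcongr
      exact ENNReal.one_le_inv.mpr hα1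

theorem mul_inv_pow_succ_mul {α : ℝ≥0∞} (hα0 : α ≠ 0) (hαtop : α ≠ ⊤) (k : ℕ) (x : ℝ≥0∞) :
    α * (α⁻¹ ^ (k + 1) * x) = α⁻¹ ^ k * x := by
  rw [pow_succ', ← mul_assoc, ← mul_assoc, ENNReal.mul_inv_cancel hα0 hαtop, one_mul]

end ENNReal

namespace ProbabilityTheory.Kernel

variable {Z : Type*} [MeasurableSpace Z]

noncomputable def minScaledIterate (Pn : ℕ → Kernel Z Z) (V : Z → ℝ≥0∞) (α : ℝ≥0∞) (T : ℕ)
    (z : Z) : ℝ≥0∞ :=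
  ⨅ n ∈ Finset.Icc 1 T, α⁻¹ ^ n * ∫⁻ w, V w ∂(Pn n z)

variable {P : Kernel Z Z} {Pn : ℕ → Kernel Z Z} {V : Z → ℝ≥0∞} {α C : ℝ≥0∞} {T : ℕ}

theorem minScaledIterate_le {n : ℕ} (hn : n ∈ Finset.Icc 1 T) (z : Z) :
    minScaledIterate Pn V α T z ≤ α⁻¹ ^ n * ∫⁻ w, V w ∂(Pn n z) :=
  biInf_le _ hn

theorem exists_minScaledIterate_eq (hT : (Finset.Icc 1 T).Nonempty) (z : Z) :
    ∃ m ∈ Finset.Icc 1 T, minScaledIterate Pn V α T z = α⁻¹ ^ m * ∫⁻ w, V w ∂(Pn m z) := by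
  obtain ⟨m, hm, hmin⟩ :=
    Finset.exists_mem_eq_inf _ hT (fun n => α⁻¹ ^ n * ∫⁻ w, V w ∂(Pn n z))
  exact ⟨m, hm, by rw [minScaledIterate, ← Finset.inf_eq_iInf, hmin]⟩

theorem minScaledIterate_le_add (hα0 : α ≠ 0) (hα1 : α ≤ 1) {y : Z}
    (hdrift : ∃ n ∈ Finset.Icc 1 T, ∫⁻ w, V w ∂(Pn n y) ≤ α ^ n * V y + C) :
    minScaledIterate Pn V α T y ≤ V y + α⁻¹ ^ T * C := by
  obtain ⟨n, hn, hle⟩ := hdrift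
  exact (minScaledIterate_le hn y).trans <|
    inv_pow_mul_le_add_of_le_pow_mul_add hα0 hα1 (Finset.mem_Icc.mp hn).2 hle

theorem lintegral_minScaledIterate_le_of_le_add [IsMarkovKernel P] (hPn1 : Pn 1 = P)
    (hα0 : α ≠ 0) (hαtop : α ≠ ⊤) {c : ℝ≥0∞} (hle : ∀ y, minScaledIterate Pn V α T y ≤ V y + c)
    (z : Z) :
    ∫⁻ y, minScaledIterate Pn V α T y ∂(P z) ≤ α * (α⁻¹ ^ 1 * ∫⁻ w, V w ∂(Pn 1 z)) + c :=
  calc ∫⁻ y, minScaledIterate Pn V α T y ∂(P z) ≤ ∫⁻ y, V y + c ∂(P z) := lintegral_mono hle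
    _ = (∫⁻ y, V y ∂(P z)) + c := by
      rw [lintegral_add_right _ measurable_const, MeasureTheory.lintegral_const, measure_univ, mul_one]
    _ = α * (α⁻¹ ^ 1 * ∫⁻ w, V w ∂(Pn 1 z)) + c := by
      rw [mul_inv_pow_succ_mul hα0 hαtop, pow_zero, one_mul, hPn1]

theorem lintegral_minScaledIterate_le_of_comp (hVmeas : Measurable V) (hα0 : α ≠ 0)
    (hαtop : α ≠ ⊤) {k : ℕ} (hk : k ∈ Finset.Icc 1 T) (hcomp : Pn (k + 1) = (Pn k).comp P)
    (z : Z) :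
    ∫⁻ y, minScaledIterate Pn V α T y ∂(P z) ≤
      α * (α⁻¹ ^ (k + 1) * ∫⁻ w, V w ∂(Pn (k + 1) z)) :=
  calc ∫⁻ y, minScaledIterate Pn V α T y ∂(P z)
      ≤ ∫⁻ y, α⁻¹ ^ k * ∫⁻ w, V w ∂(Pn k y) ∂(P z) :=
        lintegral_mono fun y => minScaledIterate_le hk y
    _ = α⁻¹ ^ k * ∫⁻ w, V w ∂(Pn (k + 1) z) := by
      rw [lintegral_const_mul' _ _ (pow_ne_top (inv_ne_top.mpr hα0)), hcomp,
        Kernel.lintegral_comp _ _ _ hVmeas]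
    _ = α * (α⁻¹ ^ (k + 1) * ∫⁻ w, V w ∂(Pn (k + 1) z)) :=
      (mul_inv_pow_succ_mul hα0 hαtop k _).symm

theorem lintegral_minScaledIterate_le [IsMarkovKernel P] (hPn1 : Pn 1 = P)
    (hPns : ∀ n, 1 ≤ n → Pn (n + 1) = (Pn n).comp P) (hVmeas : Measurable V)
    (hα0 : α ≠ 0) (hα1 : α ≤ 1)
    (hdrift : ∀ z, ∃ n ∈ Finset.Icc 1 T, ∫⁻ y, V y ∂(Pn n z) ≤ α ^ n * V z + C)
    {m : ℕ} (hm : m ∈ Finset.Icc 1 T) (z : Z) :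
    ∫⁻ y, minScaledIterate Pn V α T y ∂(P z) ≤
      α * (α⁻¹ ^ m * ∫⁻ w, V w ∂(Pn m z)) + α⁻¹ ^ T * C := by
  have hαtop : α ≠ ⊤ := ne_top_of_le_ne_top one_ne_top hα1
  obtain ⟨hm1, hmT⟩ := Finset.mem_Icc.mp hm
  obtain rfl | ⟨k, hk1, rfl⟩ : m = 1 ∨ ∃ k, 1 ≤ k ∧ m = k + 1 := by
    rcases hm1.eq_or_lt with h | h
    · exact .inl h.symm
    · exact .inr ⟨m - 1, by omega, by omega⟩
  · exact lintegral_minScaledIterate_le_of_le_add hPn1 hα0 hαtop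
      (fun y => minScaledIterate_le_add hα0 hα1 (hdrift y)) z
  · exact (lintegral_minScaledIterate_le_of_comp hVmeas hα0 hαtop
      (Finset.mem_Icc.mpr ⟨hk1, by omega⟩) (hPns k hk1) z).trans le_self_add

end ProbabilityTheory.Kernel

open ProbabilityTheory.Kernel in
theorem drift_from_finitely_many_waiting_times_general
    {Z : Type*} [MeasurableSpace Z]
    (P : Kernel Z Z) [IsMarkovKernel P]
    (Pn : ℕ → Kernel Z Z)
    (hPn1 : Pn 1 = P)
    (hPns : ∀ n, 1 ≤ n → Pn (n + 1) = (Pn n).comp P)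
    (V : Z → ℝ≥0∞) (hVmeas : Measurable V)
    (α : ℝ≥0∞) (hα0 : 0 < α) (hα1 : α < 1)
    (C : ℝ≥0∞)
    (T : ℕ)
    (hdrift : ∀ z, ∃ n ∈ Finset.Icc 1 T,
      (∫⁻ y, V y ∂(Pn n z)) ≤ α ^ n * V z + C) :
    ∀ z, (∫⁻ y, ⨅ n ∈ Finset.Icc 1 T, α⁻¹ ^ n * ∫⁻ w, V w ∂(Pn n y) ∂(P z))
      ≤ α * (⨅ n ∈ Finset.Icc 1 T, α⁻¹ ^ n * ∫⁻ w, V w ∂(Pn n z)) + α⁻¹ ^ T * C := by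
  intro z
  obtain ⟨n, hn, -⟩ := hdrift z
  obtain ⟨m, hm, hWz⟩ := exists_minScaledIterate_eq (Pn := Pn) (V := V) (α := α) ⟨n, hn⟩ z
  have key := lintegral_minScaledIterate_le hPn1 hPns hVmeas hα0.ne' hα1.le hdrift hm z
  rwa [← hWz] at key

/-- **Drift condition from finitely many waiting times.**
Let `P` be a Markov transition kernel on a measurable space `Z`, with `Pn n` its `n`-step
iterate.  Let `V : Z → [1,∞]` be measurable, `α ∈ (0,1)`, `C > 0`, `T ≥ 1`, and suppose that
for every `z` there is some `n ∈ {1,…,T}` with `Pₙ V (z) ≤ αⁿ V(z) + C`.  Then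
`W := min_{1 ≤ n ≤ T} α^{-n} Pₙ V` satisfies `P₁ W ≤ α W + α^{-T} C`. -/
theorem drift_from_finitely_many_waiting_times
    {Z : Type*} [MeasurableSpace Z]
    (P : Kernel Z Z) [IsMarkovKernel P]
    (Pn : ℕ → Kernel Z Z)
    (hPn1 : Pn 1 = P)
    (hPns : ∀ n, 1 ≤ n → Pn (n + 1) = (Pn n).comp P)
    (V : Z → ℝ≥0∞) (hVmeas : Measurable V) (hV1 : ∀ z, 1 ≤ V z)
    (α : ℝ≥0∞) (hα0 : 0 < α) (hα1 : α < 1)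
    (C : ℝ≥0∞) (hC0 : 0 < C) (hCtop : C ≠ ⊤)
    (T : ℕ) (hT : 1 ≤ T)
    (hdrift : ∀ z, ∃ n ∈ Finset.Icc 1 T,
      (∫⁻ y, V y ∂(Pn n z)) ≤ α ^ n * V z + C) :
    ∀ z, (∫⁻ y, ⨅ n ∈ Finset.Icc 1 T, α⁻¹ ^ n * ∫⁻ w, V w ∂(Pn n y) ∂(P z))
      ≤ α * (⨅ n ∈ Finset.Icc 1 T, α⁻¹ ^ n * ∫⁻ w, V w ∂(Pn n z)) + α⁻¹ ^ T * C :=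
  drift_from_finitely_many_waiting_times_general P Pn hPn1 hPns V hVmeas α hα0 hα1 C T hdrift
end

section
/- Let X be a real-valued random variable on a probability space satisfying E[exp(|X|)] ≤ C for some constant C > 0, and E[X] ≥ 1. Then there exists p₀ > 0, depending only on C, such that for all p ∈ (0, p₀) one has E[exp(−pX)] < 1 − p/2. -/
open MeasureTheory

lemma aux_one_sub_mul_exp_le (t : ℝ) : (1 - t) * Real.exp t ≤ 1 := by
  have h1 := Real.add_one_le_exp (-t)
  have h2 : Real.exp (-t) * Real.exp t = 1 := by rw [← Real.exp_add]; simp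
  nlinarith [Real.exp_pos t]

lemma aux_exp_le (t : ℝ) : Real.exp t ≤ 1 + t + t ^ 2 * Real.exp |t| := by
  rcases le_or_gt 0 t with ht | ht
  · rw [abs_of_nonneg ht]
    nlinarith [aux_one_sub_mul_exp_le t, Real.exp_pos t]
  · rw [abs_of_neg ht]
    have h3 : (1 : ℝ) ≤ Real.exp (-t) := Real.one_le_exp (by linarith)
    have h5 : Real.exp t ≤ 1 + t + t ^ 2 := by
      nlinarith [aux_one_sub_mul_exp_le t, Real.exp_pos t]
    nlinarith [sq_nonneg t, h5, h3]

lemma aux_sq_mul_exp_half_le (t : ℝ) (ht : 0 ≤ t) :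
    t ^ 2 * Real.exp (t / 2) ≤ 11 * Real.exp t := by
  have h1 := Real.add_one_le_exp (t / 8)
  have h4 : (1 + t / 8) ^ 4 ≤ Real.exp (t / 8) ^ 4 :=
    pow_le_pow_left₀ (by positivity) (by linarith) 4
  have h5 : Real.exp (t / 8) ^ 4 = Real.exp (t / 2) := by
    rw [← Real.exp_nat_mul]; norm_num; ring_nf
  have hkey : t ^ 2 ≤ 11 * Real.exp (t / 2) := by
    rw [← h5]; nlinarith [sq_nonneg t, pow_pos (Real.exp_pos (t/8)) 4]
  have h6 : Real.exp (t / 2) * Real.exp (t / 2) = Real.exp t := by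
    rw [← Real.exp_add]; ring_nf
  nlinarith [Real.exp_pos (t / 2)]

/-- **A weak reverse-Jensen inequality.**
If `X` is a real random variable with `E[exp|X|] ≤ C` and `E[X] ≥ 1`, then there is
`p₀ > 0`, depending only on `C`, such that `E[exp(-pX)] < 1 - p/2` for all `p ∈ (0, p₀)`. -/
theorem exp_neg_moment_lt_of_exp_abs_moment_le (C : ℝ) (hC : 0 < C) :
    ∃ p₀ > (0 : ℝ), ∀ (Ω : Type) [MeasurableSpace Ω] (μ : Measure Ω),
      IsProbabilityMeasure μ → ∀ X : Ω → ℝ, Measurable X →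
      Integrable (fun ω => Real.exp |X ω|) μ →
      (∫ ω, Real.exp |X ω| ∂μ) ≤ C →
      1 ≤ (∫ ω, X ω ∂μ) →
      ∀ p : ℝ, 0 < p → p < p₀ →
        (∫ ω, Real.exp (-p * X ω) ∂μ) < 1 - p / 2 := by
  refine ⟨min (1 / (22 * C)) (1 / 2), lt_min (by positivity) (by norm_num), ?_⟩
  intro Ω _ μ hμ X hX hint hC' hmean p hp hp'
  have hp1 : p < 1 / (22 * C) := lt_of_lt_of_le hp' (min_le_left _ _)
  have hp2 : p < 1 / 2 := lt_of_lt_of_le hp' (min_le_right _ _)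
  -- integrability of X
  have hXint : Integrable X μ := by
    refine hint.mono (hX.aestronglyMeasurable) (Filter.Eventually.of_forall fun ω => ?_)
    have := Real.add_one_le_exp |X ω|
    simp only [Real.norm_eq_abs, abs_abs, Real.abs_exp]
    linarith [abs_nonneg (X ω)]
  -- integrability of X^2 * exp(|X|/2)
  have hbound : ∀ ω, X ω ^ 2 * Real.exp (|X ω| / 2) ≤ 11 * Real.exp |X ω| := by
    intro ω
    have := aux_sq_mul_exp_half_le |X ω| (abs_nonneg _)
    rwa [sq_abs] at this
  have hgint : Integrable (fun ω => X ω ^ 2 * Real.exp (|X ω| / 2)) μ := by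
    refine (hint.const_mul 11).mono ?_ (Filter.Eventually.of_forall fun ω => ?_)
    · exact ((hX.pow_const 2).mul ((hX.abs.div_const 2).exp)).aestronglyMeasurable
    · have h0 : 0 ≤ X ω ^ 2 * Real.exp (|X ω| / 2) := by positivity
      have h0' : (0:ℝ) ≤ 11 * Real.exp |X ω| := by positivity
      rw [Real.norm_eq_abs, Real.norm_eq_abs, abs_of_nonneg h0, abs_of_nonneg h0']
      exact hbound ω
  -- integrability of exp(-pX)
  have hpexp : ∀ ω, Real.exp (-p * X ω) ≤ Real.exp |X ω| := by
    intro ω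
    apply Real.exp_le_exp.2
    calc -p * X ω ≤ |(-p) * X ω| := le_abs_self _
      _ = p * |X ω| := by rw [abs_mul, abs_neg, abs_of_pos hp]
      _ ≤ 1 * |X ω| := by
          apply mul_le_mul_of_nonneg_right (by linarith) (abs_nonneg _)
      _ = |X ω| := one_mul _
  have hexpint : Integrable (fun ω => Real.exp (-p * X ω)) μ := by
    refine hint.mono ((hX.const_mul (-p)).exp).aestronglyMeasurable
      (Filter.Eventually.of_forall fun ω => ?_)
    simp only [Real.norm_eq_abs, Real.abs_exp]
    exact hpexp ω
  -- pointwise bound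
  have hpt : ∀ ω, Real.exp (-p * X ω) ≤
      1 + (-p) * X ω + p ^ 2 * (X ω ^ 2 * Real.exp (|X ω| / 2)) := by
    intro ω
    have h1 := aux_exp_le (-p * X ω)
    have h2 : |(-p) * X ω| = p * |X ω| := by rw [abs_mul, abs_neg, abs_of_pos hp]
    have h3 : Real.exp (p * |X ω|) ≤ Real.exp (|X ω| / 2) :=
      Real.exp_le_exp.2 (by nlinarith [abs_nonneg (X ω)])
    have h4 : (-p * X ω) ^ 2 = p ^ 2 * X ω ^ 2 := by ring
    calc Real.exp (-p * X ω)
        ≤ 1 + (-p * X ω) + (-p * X ω) ^ 2 * Real.exp |(-p) * X ω| := h1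
      _ ≤ 1 + (-p) * X ω + p ^ 2 * (X ω ^ 2 * Real.exp (|X ω| / 2)) := by
          rw [h2, h4]
          have : p ^ 2 * X ω ^ 2 * Real.exp (p * |X ω|)
              ≤ p ^ 2 * X ω ^ 2 * Real.exp (|X ω| / 2) :=
            mul_le_mul_of_nonneg_left h3 (by positivity)
          nlinarith
  -- integrate
  have hrhsint : Integrable
      (fun ω => 1 + (-p) * X ω + p ^ 2 * (X ω ^ 2 * Real.exp (|X ω| / 2))) μ :=
    ((integrable_const 1).add (hXint.const_mul (-p))).add (hgint.const_mul (p ^ 2))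
  have hmono : (∫ ω, Real.exp (-p * X ω) ∂μ)
      ≤ ∫ ω, (1 + (-p) * X ω + p ^ 2 * (X ω ^ 2 * Real.exp (|X ω| / 2))) ∂μ :=
    integral_mono hexpint hrhsint hpt
  have hsplit : (∫ ω, (1 + (-p) * X ω + p ^ 2 * (X ω ^ 2 * Real.exp (|X ω| / 2))) ∂μ)
      = 1 + (-p) * (∫ ω, X ω ∂μ) + p ^ 2 * (∫ ω, X ω ^ 2 * Real.exp (|X ω| / 2) ∂μ) := by
    have h1 : Integrable (fun ω => 1 + (-p) * X ω) μ := by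
      simpa using (integrable_const (1:ℝ)).add (hXint.const_mul (-p))
    rw [integral_add h1 (hgint.const_mul (p ^ 2)),
      integral_add (integrable_const 1) (hXint.const_mul (-p)),
      integral_const, integral_const_mul, integral_const_mul]
    simp [hμ.measure_univ]
  have hgle : (∫ ω, X ω ^ 2 * Real.exp (|X ω| / 2) ∂μ) ≤ 11 * C := by
    calc (∫ ω, X ω ^ 2 * Real.exp (|X ω| / 2) ∂μ)
        ≤ ∫ ω, 11 * Real.exp |X ω| ∂μ :=
          integral_mono hgint (hint.const_mul 11) hbound
      _ = 11 * ∫ ω, Real.exp |X ω| ∂μ := integral_const_mul _ _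
      _ ≤ 11 * C := by linarith
  have hfinal : 1 + (-p) * (∫ ω, X ω ∂μ)
      + p ^ 2 * (∫ ω, X ω ^ 2 * Real.exp (|X ω| / 2) ∂μ) < 1 - p / 2 := by
    have hm : (-p) * (∫ ω, X ω ∂μ) ≤ -p := by nlinarith
    have h11 : p ^ 2 * (∫ ω, X ω ^ 2 * Real.exp (|X ω| / 2) ∂μ) ≤ p ^ 2 * (11 * C) :=
      mul_le_mul_of_nonneg_left hgle (by positivity)
    have hpC : p * (22 * C) < 1 := by
      rw [div_eq_mul_inv] at hp1
      have h22 : (0:ℝ) < 22 * C := by positivity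
      calc p * (22 * C) < (1 * (22 * C)⁻¹) * (22 * C) :=
            mul_lt_mul_of_pos_right hp1 h22
        _ = 1 := by field_simp
    nlinarith
  calc (∫ ω, Real.exp (-p * X ω) ∂μ)
      ≤ _ := hmono
    _ = _ := hsplit
    _ < 1 - p / 2 := hfinal
end

section
/- Let f : (0,1] × (0,1) → [0,1] be monotone nonincreasing in its first variable and monotone nondecreasing in its second variable, and suppose that for every x ∈ (0,1], f(x,y) → 0 as y → 0. Then there exists a continuous nondecreasing function r : (0,1) → (0,1] such that f(r(y), y) ≤ r(y) for all y ∈ (0,1) and r(y) → 0 as y → 0. -/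
open Set Filter

/-- **A soft decay-rate selection lemma.**
Let `f : (0,1] × (0,1) → [0,1]` be nonincreasing in its first variable, nondecreasing in its
second variable, and such that `f(x,y) → 0` as `y → 0` for each fixed `x`.  Then there is a
continuous nondecreasing `r : (0,1) → (0,1]` with `f(r(y), y) ≤ r(y)` for all `y ∈ (0,1)`
and `r(y) → 0` as `y → 0`. -/
theorem exists_continuous_rate_of_pointwise_decay (f : ℝ → ℝ → ℝ)
    (hrange : ∀ x ∈ Ioc (0:ℝ) 1, ∀ y ∈ Ioo (0:ℝ) 1, f x y ∈ Icc (0:ℝ) 1)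
    (hanti : ∀ y ∈ Ioo (0:ℝ) 1, ∀ x ∈ Ioc (0:ℝ) 1, ∀ x' ∈ Ioc (0:ℝ) 1,
      x ≤ x' → f x' y ≤ f x y)
    (hmono : ∀ x ∈ Ioc (0:ℝ) 1, ∀ y ∈ Ioo (0:ℝ) 1, ∀ y' ∈ Ioo (0:ℝ) 1,
      y ≤ y' → f x y ≤ f x y')
    (hlim : ∀ x ∈ Ioc (0:ℝ) 1,
      Tendsto (fun y => f x y) (nhdsWithin 0 (Ioo (0:ℝ) 1)) (nhds 0)) :
    ∃ r : ℝ → ℝ,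
      ContinuousOn r (Ioo (0:ℝ) 1) ∧
      MonotoneOn r (Ioo (0:ℝ) 1) ∧
      (∀ y ∈ Ioo (0:ℝ) 1, r y ∈ Ioc (0:ℝ) 1 ∧ f (r y) y ≤ r y) ∧
      Tendsto r (nhdsWithin 0 (Ioo (0:ℝ) 1)) (nhds 0) := by
  classical
  -- Step 1: choose moduli η n for x = (1/2)^(n+2)
  have H : ∀ n : ℕ, ∃ e > (0:ℝ), ∀ y ∈ Ioo (0:ℝ) 1, y < e →
      f ((1/2:ℝ)^(n+2)) y ≤ (1/2:ℝ)^(n+2) := by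
    intro n
    have hx : ((1/2:ℝ)^(n+2)) ∈ Ioc (0:ℝ) 1 :=
      ⟨by positivity, pow_le_one₀ (by norm_num) (by norm_num)⟩
    have h := (hlim _ hx)
    rw [Metric.tendsto_nhdsWithin_nhds] at h
    obtain ⟨e, he, h⟩ := h _ (show (0:ℝ) < (1/2:ℝ)^(n+2) by positivity)
    refine ⟨e, he, fun y hy hye => ?_⟩
    have := h hy (by rw [Real.dist_eq, sub_zero, abs_of_pos hy.1]; exact hye)
    rw [Real.dist_eq, sub_zero] at this
    exact (le_abs_self _).trans this.le
  choose η ηpos hη using H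
  -- Step 2: a strictly decreasing sequence δ
  set m : ℕ → ℝ := fun n => min 1 ((Finset.range (n+1)).inf' Finset.nonempty_range_add_one η)
    with hmdef
  have mpos : ∀ n, 0 < m n := by
    intro n
    refine lt_min one_pos ?_
    rw [Finset.lt_inf'_iff]
    exact fun i _ => ηpos i
  have mle : ∀ n, m n ≤ η n := fun n =>
    (min_le_right _ _).trans (Finset.inf'_le _ (Finset.self_mem_range_succ n))
  have manti : ∀ n, m (n+1) ≤ m n := by
    intro n
    exact min_le_min le_rfl (Finset.inf'_mono _
      (Finset.range_subset_range.2 (Nat.le_succ _)) _)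
  set δ : ℕ → ℝ := fun n => (1/2:ℝ)^(n+1) * m n with hδdef
  have δpos : ∀ n, 0 < δ n := fun n => by
    have := mpos n; positivity
  have δle : ∀ n, δ n ≤ (1/2:ℝ)^(n+1) := by
    intro n
    calc (1/2:ℝ)^(n+1) * m n ≤ (1/2:ℝ)^(n+1) * 1 :=
          mul_le_mul_of_nonneg_left (min_le_left _ _) (by positivity)
      _ = (1/2:ℝ)^(n+1) := by ring
  have δsucc : ∀ n, δ (n+1) < δ n := by
    intro n
    have h1 : (1/2:ℝ)^(n+1+1) * m (n+1) ≤ (1/2:ℝ)^(n+1+1) * m n :=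
      mul_le_mul_of_nonneg_left (manti n) (by positivity)
    have h2 : (1/2:ℝ)^(n+1+1) * m n < (1/2:ℝ)^(n+1) * m n := by
      have := mpos n
      have : ((1/2:ℝ)^(n+1+1)) < (1/2:ℝ)^(n+1) :=
        pow_lt_pow_right_of_lt_one₀ (by norm_num) (by norm_num) (Nat.lt_succ_self _)
      exact mul_lt_mul_of_pos_right this (mpos n)
    exact lt_of_le_of_lt h1 h2
  have δanti : Antitone δ := (strictAnti_nat_of_succ_lt δsucc).antitone
  have δlη : ∀ n, δ n < η n := by
    intro n
    have hp : (1/2:ℝ)^(n+1) ≤ (1/2:ℝ) := by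
      have := pow_le_pow_of_le_one (show (0:ℝ) ≤ 1/2 by norm_num)
        (show (1/2:ℝ) ≤ 1 by norm_num) (show 1 ≤ n+1 by omega)
      simpa using this
    have h1 : δ n ≤ (1/2:ℝ) * m n :=
      mul_le_mul_of_nonneg_right hp (mpos n).le
    have h2 : (1/2:ℝ) * m n < m n := by
      have := mpos n; linarith
    exact lt_of_le_of_lt h1 (h2.trans_le (mle n))
  have key : ∀ n, ∀ y ∈ Ioo (0:ℝ) 1, y ≤ δ n →
      f ((1/2:ℝ)^(n+2)) y ≤ (1/2:ℝ)^(n+2) :=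
    fun n y hy hle => hη n y hy (lt_of_le_of_lt hle (δlη n))
  -- Step 3: the gluing functions
  set g : ℕ → ℝ → ℝ := fun n y => max 0 (min 1 ((y - δ (n+1)) / (δ n - δ (n+1)))) with hgdef
  have hden : ∀ n, 0 < δ n - δ (n+1) := fun n => sub_pos.2 (δsucc n)
  have g_nonneg : ∀ n y, 0 ≤ g n y := fun n y => le_max_left _ _
  have g_le_one : ∀ n y, g n y ≤ 1 := fun n y => max_le zero_le_one (min_le_left _ _)
  have g_mono : ∀ n, Monotone (g n) := by
    intro n a b hab
    refine max_le_max le_rfl (min_le_min le_rfl ?_)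
    exact div_le_div_of_nonneg_right (sub_le_sub_right hab _) (hden n).le
  have g_one : ∀ n y, δ n ≤ y → g n y = 1 := by
    intro n y h
    have h1 : (1:ℝ) ≤ (y - δ (n+1)) / (δ n - δ (n+1)) := by
      rw [le_div_iff₀ (hden n)]
      linarith
    rw [hgdef]
    simp only [min_eq_left h1]
    exact max_eq_right zero_le_one
  have g_zero : ∀ n y, y ≤ δ (n+1) → g n y = 0 := by
    intro n y h
    have h1 : (y - δ (n+1)) / (δ n - δ (n+1)) ≤ 0 :=
      div_nonpos_iff.2 (Or.inr ⟨by linarith, (hden n).le⟩)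
    exact max_eq_left ((min_le_right _ _).trans h1)
  have g_cont : ∀ n, Continuous (g n) := by
    intro n
    exact continuous_const.max (continuous_const.min
      ((continuous_id.sub continuous_const).div_const _))
  -- Step 4: the rate function
  have usummable : Summable (fun n : ℕ => (1/2:ℝ)^(n+1)) := by
    simp_rw [pow_succ]
    exact (summable_geometric_of_lt_one (by norm_num) (by norm_num)).mul_right _
  have utsum : ∑' n : ℕ, (1/2:ℝ)^(n+1) = 1 := by
    simp_rw [pow_succ]
    rw [tsum_mul_right, tsum_geometric_of_lt_one (by norm_num) (by norm_num)]
    norm_num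
  set r : ℝ → ℝ := fun y => ∑' n : ℕ, (1/2:ℝ)^(n+1) * g n y with hrdef
  have term_nonneg : ∀ n y, 0 ≤ (1/2:ℝ)^(n+1) * g n y := fun n y => by
    have := g_nonneg n y; positivity
  have term_le : ∀ n y, (1/2:ℝ)^(n+1) * g n y ≤ (1/2:ℝ)^(n+1) := fun n y =>
    mul_le_of_le_one_right (by positivity) (g_le_one n y)
  have hsum : ∀ y, Summable (fun n : ℕ => (1/2:ℝ)^(n+1) * g n y) := fun y =>
    Summable.of_nonneg_of_le (fun n => term_nonneg n y) (fun n => term_le n y) usummable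
  have r_nonneg : ∀ y, 0 ≤ r y := fun y => tsum_nonneg (fun n => term_nonneg n y)
  have r_le_one : ∀ y, r y ≤ 1 := by
    intro y
    calc r y ≤ ∑' n : ℕ, (1/2:ℝ)^(n+1) :=
          Summable.tsum_le_tsum (fun n => term_le n y) (hsum y) usummable
      _ = 1 := utsum
  have r_mono : Monotone r := by
    intro a b hab
    exact Summable.tsum_le_tsum
      (fun n => mul_le_mul_of_nonneg_left (g_mono n hab) (by positivity))
      (hsum a) (hsum b)
  have r_cont : Continuous r := by
    refine continuous_tsum (u := fun n : ℕ => (1/2:ℝ)^(n+1))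
      (fun n => continuous_const.mul (g_cont n)) usummable (fun n x => ?_)
    rw [Real.norm_eq_abs, abs_of_nonneg (term_nonneg n x)]
    exact term_le n x
  have r_ge : ∀ n y, δ n ≤ y → (1/2:ℝ)^(n+1) ≤ r y := by
    intro n y h
    have := Summable.le_tsum (hsum y) n (fun i _ => term_nonneg i y)
    rwa [g_one n y h, mul_one] at this
  have r_eq_one : ∀ y, δ 0 ≤ y → r y = 1 := by
    intro y h
    rw [hrdef]
    have : ∀ n : ℕ, (1/2:ℝ)^(n+1) * g n y = (1/2:ℝ)^(n+1) := by
      intro n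
      rw [g_one n y ((δanti (Nat.zero_le n)).trans h), mul_one]
    simp only [this]
    exact utsum
  have r_small : ∀ (k : ℕ) (y : ℝ), y ≤ δ k → r y ≤ (1/2:ℝ)^k := by
    intro k y hy
    have hzero : ∀ n < k, (1/2:ℝ)^(n+1) * g n y = 0 := by
      intro n hn
      rw [g_zero n y (hy.trans (δanti hn)), mul_zero]
    have hsplit := Summable.sum_add_tsum_nat_add k (hsum y)
    have hfin : ∑ i ∈ Finset.range k, (1/2:ℝ)^(i+1) * g i y = 0 :=
      Finset.sum_eq_zero (fun i hi => hzero i (Finset.mem_range.1 hi))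
    have htail : ∑' i : ℕ, (1/2:ℝ)^(i+k+1) * g (i+k) y ≤ (1/2:ℝ)^k := by
      have hle : ∀ i : ℕ, (1/2:ℝ)^(i+k+1) * g (i+k) y ≤ (1/2:ℝ)^k * (1/2:ℝ)^(i+1) := by
        intro i
        calc (1/2:ℝ)^(i+k+1) * g (i+k) y ≤ (1/2:ℝ)^(i+k+1) := term_le _ _
          _ = (1/2:ℝ)^k * (1/2:ℝ)^(i+1) := by ring
      calc ∑' i : ℕ, (1/2:ℝ)^(i+k+1) * g (i+k) y
          ≤ ∑' i : ℕ, (1/2:ℝ)^k * (1/2:ℝ)^(i+1) :=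
            Summable.tsum_le_tsum hle ((hsum y).comp_injective (add_left_injective k))
              (usummable.mul_left _)
        _ = (1/2:ℝ)^k * ∑' i : ℕ, (1/2:ℝ)^(i+1) := tsum_mul_left
        _ = (1/2:ℝ)^k := by rw [utsum, mul_one]
    calc r y = ∑ i ∈ Finset.range k, (1/2:ℝ)^(i+1) * g i y
          + ∑' i : ℕ, (1/2:ℝ)^(i+k+1) * g (i+k) y := hsplit.symm
      _ = ∑' i : ℕ, (1/2:ℝ)^(i+k+1) * g (i+k) y := by rw [hfin, zero_add]
      _ ≤ (1/2:ℝ)^k := htail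
  -- Step 5: conclude
  refine ⟨r, r_cont.continuousOn, r_mono.monotoneOn _, ?_, ?_⟩
  · intro y hy
    rcases le_or_gt (δ 0) y with hc | hc
    · rw [r_eq_one y hc]
      exact ⟨⟨one_pos, le_rfl⟩, (hrange 1 ⟨one_pos, le_rfl⟩ y hy).2⟩
    · -- find k with δ (k+1) ≤ y < δ k
      have hex : ∃ n, δ n ≤ y := by
        obtain ⟨n, hn⟩ := exists_pow_lt_of_lt_one hy.1 (show (1/2:ℝ) < 1 by norm_num)
        exact ⟨n, (δle n).trans ((pow_le_pow_of_le_one (by norm_num) (by norm_num)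
          (Nat.le_succ n)).trans hn.le)⟩
      set K := Nat.find hex with hKdef
      have hK : δ K ≤ y := Nat.find_spec hex
      have hKne : K ≠ 0 := by
        intro h0
        rw [h0] at hK
        exact absurd hK (not_le.2 hc)
      obtain ⟨k, hk⟩ : ∃ k, K = k + 1 := ⟨K - 1, (Nat.succ_pred_eq_of_pos (Nat.pos_of_ne_zero hKne)).symm⟩
      have hyk : y < δ k := by
        have := Nat.find_min hex (by omega : k < K)
        exact not_le.1 this
      have hyk1 : δ (k+1) ≤ y := by rwa [hk] at hK
      have hrge : (1/2:ℝ)^(k+2) ≤ r y := r_ge (k+1) y hyk1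
      have hrpos : 0 < r y := lt_of_lt_of_le (by positivity) hrge
      have hrIoc : r y ∈ Ioc (0:ℝ) 1 := ⟨hrpos, r_le_one y⟩
      have hxIoc : ((1/2:ℝ)^(k+2)) ∈ Ioc (0:ℝ) 1 :=
        ⟨by positivity, pow_le_one₀ (by norm_num) (by norm_num)⟩
      refine ⟨hrIoc, ?_⟩
      calc f (r y) y ≤ f ((1/2:ℝ)^(k+2)) y :=
            hanti y hy _ hxIoc _ hrIoc hrge
        _ ≤ (1/2:ℝ)^(k+2) := key k y hy hyk.le
        _ ≤ r y := hrge
  · rw [Metric.tendsto_nhdsWithin_nhds]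
    intro ε hε
    obtain ⟨k, hk⟩ := exists_pow_lt_of_lt_one hε (show (1/2:ℝ) < 1 by norm_num)
    refine ⟨δ k, δpos k, fun y hy hdist => ?_⟩
    rw [Real.dist_eq, sub_zero, abs_of_pos hy.1] at hdist
    rw [Real.dist_eq, sub_zero, abs_of_nonneg (r_nonneg y)]
    exact lt_of_le_of_lt (r_small k y hdist.le) hk
end

section
/- Let F ⊆ ℤ² ∖ {(0,0)} be a finite set such that F = −F, there exist k, j ∈ F with |k| ≠ |j| (Euclidean norms), and the subgroup of ℤ² generated by F equals ℤ². Define A₀ := F and, inductively, A_{n+1} := A_n ∪ { k + j : k ∈ A_n, j ∈ F, |k| ≠ |j|, k·j^⊥ ≠ 0 }, where for j = (j₁,j₂) we set j^⊥ := (−j₂, j₁). Then ⋃_{n ∈ ℕ} A_n = ℤ² ∖ {(0,0)}. -/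
/-!
Let `S = ⋃ₙ Aₙ`, choose non-parallel `a, b ∈ F` with `|a| ≠ |b|` and put
`Q = max |a|² |b|²`. From a point of `S` of squared norm above `Q` the norm condition is
automatic, so `S` may step by `±a` (resp. `±b`) off the line `ℝa` (resp. `ℝb`). If `p` is far
from the line `ℝc`, the whole line `p + ℤc` stays outside the disc; by Cramer's rule every
point of large norm is far from `ℝa` or from `ℝb`, and walking along two such lines joins any
two points of large norm in a coset of `ℤa + ℤb`. Greedily increasing the norm from `a ± b`
gives such a point of `S` in `ℤa + ℤb`, a step by `f ∈ F` from a point of large norm carries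
one to the coset of `f`, and `F` generates `ℤ²`; so `S` contains all points of large norm.
Finally a downward induction on the norm fills in the rest: for `q ≠ 0` take `f ∈ F` not
parallel to `q` with `q·f ≥ 0`; then `q + f` is longer than both `q` and `f`, and
`q = (q + f) + (-f)` is a legal step.
-/

namespace ForcedModes

def normSq (p : ℤ × ℤ) : ℤ := p.1 ^ 2 + p.2 ^ 2

def dot (p q : ℤ × ℤ) : ℤ := p.1 * q.1 + p.2 * q.2

def cross (p q : ℤ × ℤ) : ℤ := p.1 * q.2 - p.2 * q.1

lemma normSq_nonneg (p : ℤ × ℤ) : 0 ≤ normSq p := by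
  unfold normSq; positivity

lemma normSq_pos {p : ℤ × ℤ} (hp : p ≠ 0) : 0 < normSq p := by
  obtain ⟨u, v⟩ := p
  have : u ≠ 0 ∨ v ≠ 0 := by
    simpa only [ne_eq, Prod.ext_iff, Prod.fst_zero, Prod.snd_zero, not_and_or] using hp
  rcases this with h | h <;> (unfold normSq; positivity)

@[simp] lemma normSq_zero : normSq 0 = 0 := by
  simp [normSq]

lemma normSq_neg (p : ℤ × ℤ) : normSq (-p) = normSq p := by
  simp [normSq]

lemma normSq_add (p q : ℤ × ℤ) : normSq (p + q) = normSq p + 2 * dot p q + normSq q := by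
  simp only [normSq, dot, Prod.fst_add, Prod.snd_add]; ring

lemma normSq_zsmul (n : ℤ) (p : ℤ × ℤ) : normSq (n • p) = n ^ 2 * normSq p := by
  simp only [normSq, Prod.smul_fst, Prod.smul_snd, smul_eq_mul]; ring

lemma normSq_sub_le (p q : ℤ × ℤ) : normSq (p - q) ≤ 2 * normSq p + 2 * normSq q := by
  simp only [normSq, Prod.fst_sub, Prod.snd_sub]
  nlinarith [sq_nonneg (p.1 + q.1), sq_nonneg (p.2 + q.2)]

lemma normSq_add_le_of_dot_nonneg {p q : ℤ × ℤ} (h : 0 ≤ dot p q) :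
    normSq p + normSq q ≤ normSq (p + q) := by
  rw [normSq_add]; omega

lemma dot_neg_right (p q : ℤ × ℤ) : dot p (-q) = -dot p q := by
  simp only [dot, Prod.fst_neg, Prod.snd_neg]; ring

lemma cross_self (p : ℤ × ℤ) : cross p p = 0 := by
  simp only [cross]; ring

lemma cross_anticomm (p q : ℤ × ℤ) : cross q p = -cross p q := by
  simp only [cross]; ring

lemma cross_neg_right (p q : ℤ × ℤ) : cross p (-q) = -cross p q := by
  simp only [cross, Prod.fst_neg, Prod.snd_neg]; ring

lemma cross_add_left (p q r : ℤ × ℤ) : cross (p + q) r = cross p r + cross q r := by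
  simp only [cross, Prod.fst_add, Prod.snd_add]; ring

lemma cross_zsmul_left (n : ℤ) (p q : ℤ × ℤ) : cross (n • p) q = n * cross p q := by
  simp only [cross, Prod.smul_fst, Prod.smul_snd, smul_eq_mul]; ring

lemma cross_add_zsmul_self (p q : ℤ × ℤ) (n : ℤ) : cross (p + n • q) q = cross p q := by
  rw [cross_add_left, cross_zsmul_left, cross_self, mul_zero, add_zero]

lemma right_ne_zero_of_cross_ne_zero {p q : ℤ × ℤ} (h : cross p q ≠ 0) : q ≠ 0 := by
  rintro rfl; simp [cross] at h

/-- Lagrange's identity `dot² + cross² = |p|²|q|²`. -/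
lemma cross_sq_le (p q : ℤ × ℤ) : cross p q ^ 2 ≤ normSq p * normSq q := by
  have : dot p q ^ 2 + cross p q ^ 2 = normSq p * normSq q := by
    simp only [dot, cross, normSq]; ring
  nlinarith [sq_nonneg (dot p q)]

lemma lt_normSq_of_mul_lt_cross_sq {B : ℤ} {p q : ℤ × ℤ} (h : B * normSq q < cross p q ^ 2) :
    B < normSq p :=
  lt_of_mul_lt_mul_right (h.trans_le (cross_sq_le p q)) (normSq_nonneg q)

lemma cross_eq_zero_of_cross_eq_zero {p q r : ℤ × ℤ} (hp : p ≠ 0) (hq : cross p q = 0)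
    (hr : cross p r = 0) : cross q r = 0 := by
  have h1 : p.1 * cross q r = 0 := by
    simp only [cross] at *; linear_combination q.1 * hr - r.1 * hq
  have h2 : p.2 * cross q r = 0 := by
    simp only [cross] at *; linear_combination q.2 * hr - r.2 * hq
  by_contra h
  exact hp (Prod.ext (by simpa [h] using h1) (by simpa [h] using h2))

lemma cross_ne_zero_or_cross_ne_zero {a b q : ℤ × ℤ} (hab : cross a b ≠ 0) (hq : q ≠ 0) :
    cross q a ≠ 0 ∨ cross q b ≠ 0 := by
  by_contra! h
  exact hab (cross_eq_zero_of_cross_eq_zero hq h.1 h.2)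

/-- Cramer's rule for the basis `a, b`. -/
lemma cross_smul_eq (a b q : ℤ × ℤ) : cross a b • q = cross q b • a - cross q a • b := by
  ext <;> simp only [cross, Prod.smul_fst, Prod.smul_snd, Prod.fst_sub, Prod.snd_sub,
    smul_eq_mul] <;> ring

lemma normSq_le_of_cross_sq_le {a b q : ℤ × ℤ} {Q : ℤ} (hab : cross a b ≠ 0)
    (ha : cross q a ^ 2 ≤ Q * normSq a) (hb : cross q b ^ 2 ≤ Q * normSq b) :
    normSq q ≤ 4 * Q * normSq a * normSq b := by
  have hD : 1 ≤ cross a b ^ 2 := (one_le_sq_iff_one_le_abs _).mpr (Int.one_le_abs hab)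
  have hNa := normSq_nonneg a
  have hNb := normSq_nonneg b
  have hNq := normSq_nonneg q
  calc normSq q ≤ cross a b ^ 2 * normSq q := le_mul_of_one_le_left hNq hD
    _ = normSq (cross q b • a - cross q a • b) := by rw [← cross_smul_eq, normSq_zsmul]
    _ ≤ 2 * (cross q b ^ 2 * normSq a) + 2 * (cross q a ^ 2 * normSq b) := by
      simpa only [normSq_zsmul] using normSq_sub_le (cross q b • a) (cross q a • b)
    _ ≤ 4 * Q * normSq a * normSq b := by
      nlinarith [mul_le_mul_of_nonneg_right ha hNb, mul_le_mul_of_nonneg_right hb hNa]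

lemma exists_lt_cross_sq {c f : ℤ × ℤ} (hcf : cross c f ≠ 0) (y : ℤ × ℤ) (B : ℤ) :
    ∃ s : ℤ, B < cross (y + s • c) f ^ 2 := by
  set t := cross y f
  set d := cross c f
  have hd : 1 ≤ d ^ 2 := (one_le_sq_iff_one_le_abs _).mpr (Int.one_le_abs hcf)
  refine ⟨d * (|t| + |B| + 1), ?_⟩
  have hv : |B| + 1 ≤ t + d * (|t| + |B| + 1) * d := by
    nlinarith [neg_abs_le t, abs_nonneg B, abs_nonneg t]
  rw [cross_add_left, cross_zsmul_left]
  nlinarith [le_abs_self B, abs_nonneg B]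

/-- `q` lies at distance more than `√Q` from the line `ℝ c`, hence so does all of
`q + ℤ c`. -/
def IsWide (Q : ℤ) (q c : ℤ × ℤ) : Prop := Q * normSq c < cross q c ^ 2

lemma IsWide.add_zsmul {Q : ℤ} {q c : ℤ × ℤ} (h : IsWide Q q c) (n : ℤ) :
    IsWide Q (q + n • c) c := by
  rwa [IsWide, cross_add_zsmul_self]

lemma IsWide.lt_normSq {Q : ℤ} {q c : ℤ × ℤ} (h : IsWide Q q c) : Q < normSq q :=
  lt_normSq_of_mul_lt_cross_sq h

lemma IsWide.cross_ne_zero {Q : ℤ} {q c : ℤ × ℤ} (hQ : normSq c ≤ Q) (h : IsWide Q q c) :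
    cross q c ≠ 0 := by
  intro h0
  have := mul_nonneg ((normSq_nonneg c).trans hQ) (normSq_nonneg c)
  simp only [IsWide, h0] at h
  omega

lemma isWide_or_isWide {Q : ℤ} {a b q : ℤ × ℤ} (hab : cross a b ≠ 0)
    (hq : 4 * Q * normSq a * normSq b < normSq q) : IsWide Q q a ∨ IsWide Q q b := by
  by_contra! h
  simp only [IsWide, not_lt] at h
  exact (normSq_le_of_cross_sq_le hab h.1 h.2).not_gt hq

lemma exists_mem_cross_ne_zero_normSq_add_le {G : Set (ℤ × ℤ)} (hGsym : ∀ g ∈ G, -g ∈ G)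
    (hG : ∀ q ≠ 0, ∃ g ∈ G, cross q g ≠ 0) {q : ℤ × ℤ} (hq : q ≠ 0) :
    ∃ g ∈ G, cross q g ≠ 0 ∧ normSq q + normSq g ≤ normSq (q + g) := by
  obtain ⟨g, hg, hqg⟩ := hG q hq
  rcases le_total 0 (dot q g) with h | h
  · exact ⟨g, hg, hqg, normSq_add_le_of_dot_nonneg h⟩
  · refine ⟨-g, hGsym g hg, by rwa [cross_neg_right, neg_ne_zero], ?_⟩
    exact normSq_add_le_of_dot_nonneg (by rw [dot_neg_right]; omega)

def IsForcingClosed (F S : Set (ℤ × ℤ)) : Prop :=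
  ∀ k ∈ S, ∀ j ∈ F, normSq k ≠ normSq j → cross k j ≠ 0 → k + j ∈ S

namespace IsForcingClosed

variable {F S : Set (ℤ × ℤ)}

lemma sub_mem {k j : ℤ × ℤ} (hS : IsForcingClosed F S) (hsym : ∀ f ∈ F, -f ∈ F)
    (hk : k ∈ S) (hj : j ∈ F) (hkj : normSq k ≠ normSq j) (hcross : cross k j ≠ 0) :
    k - j ∈ S := by
  rw [sub_eq_add_neg]
  exact hS k hk (-j) (hsym j hj) (by rwa [normSq_neg]) (by rwa [cross_neg_right, neg_ne_zero])

lemma add_zsmul_mem {Q : ℤ} {q c : ℤ × ℤ} (hS : IsForcingClosed F S)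
    (hsym : ∀ f ∈ F, -f ∈ F) (hc : c ∈ F) (hcQ : normSq c ≤ Q) (hwide : IsWide Q q c)
    (hq : q ∈ S) (n : ℤ) : q + n • c ∈ S := by
  have step : ∀ m : ℤ, q + m • c ∈ S →
      q + (m + 1) • c ∈ S ∧ q + (m - 1) • c ∈ S := by
    intro m hm
    have hw := hwide.add_zsmul m
    have hne : normSq (q + m • c) ≠ normSq c := (hcQ.trans_lt hw.lt_normSq).ne'
    rw [show q + (m + 1) • c = q + m • c + c by module,
      show q + (m - 1) • c = q + m • c - c by module]
    have hcross := hw.cross_ne_zero hcQ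
    exact ⟨hS _ hm c hc hne hcross, hS.sub_mem hsym hm hc hne hcross⟩
  induction n using Int.induction_on with
  | zero => simpa using hq
  | succ m ih => exact (step m ih).1
  | pred m ih => exact (step _ ih).2

lemma exists_add_zsmul_isWide {Q : ℤ} {p c d : ℤ × ℤ} (hS : IsForcingClosed F S)
    (hsym : ∀ f ∈ F, -f ∈ F) (hc : c ∈ F) (hcQ : normSq c ≤ Q) (hcd : cross c d ≠ 0)
    (hwide : IsWide Q p c) (hp : p ∈ S) :
    ∃ s : ℤ, p + s • c ∈ S ∧ IsWide Q (p + s • c) c ∧ IsWide Q (p + s • c) d := by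
  obtain ⟨s, hs⟩ := exists_lt_cross_sq hcd p (Q * normSq d)
  exact ⟨s, hS.add_zsmul_mem hsym hc hcQ hwide hp s, hwide.add_zsmul s, hs⟩

/-- Walk along the wide line `p + ℤ c`, then along the wide line `q + ℤ d`. -/
lemma mem_of_isWide_of_isWide {Q : ℤ} {p q c d : ℤ × ℤ} (hS : IsForcingClosed F S)
    (hsym : ∀ f ∈ F, -f ∈ F) (hc : c ∈ F) (hd : d ∈ F) (hcQ : normSq c ≤ Q)
    (hdQ : normSq d ≤ Q) (hp : IsWide Q p c) (hq : IsWide Q q d) (hpS : p ∈ S)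
    (hpq : q - p ∈ AddSubgroup.closure {c, d}) : q ∈ S := by
  obtain ⟨m, n, hmn⟩ := AddSubgroup.mem_closure_pair.mp hpq
  have hcorner : q + (-n) • d = p + m • c := by
    rw [neg_zsmul, ← sub_eq_add_neg, sub_eq_iff_eq_add, add_assoc, hmn, add_sub_cancel]
  have := hS.add_zsmul_mem hsym hd hdQ (hq.add_zsmul (-n))
    (hcorner ▸ hS.add_zsmul_mem hsym hc hcQ hp hpS m) n
  rwa [add_assoc, ← add_zsmul, neg_add_cancel, zero_smul, add_zero] at this

lemma mem_of_lt_normSq {Q : ℤ} {a b p q : ℤ × ℤ} (hS : IsForcingClosed F S)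
    (hsym : ∀ f ∈ F, -f ∈ F) (ha : a ∈ F) (hb : b ∈ F) (haQ : normSq a ≤ Q)
    (hbQ : normSq b ≤ Q) (hab : cross a b ≠ 0) (hp : p ∈ S)
    (hpM : 4 * Q * normSq a * normSq b < normSq p)
    (hpq : q - p ∈ AddSubgroup.closure {a, b})
    (hqM : 4 * Q * normSq a * normSq b < normSq q) : q ∈ S := by
  have hL : ∀ (s : ℤ) (c : ℤ × ℤ), c ∈ ({a, b} : Set (ℤ × ℤ)) →
      q - (p + s • c) ∈ AddSubgroup.closure {a, b} := fun s c hc => by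
    rw [sub_add_eq_sub_sub]
    exact AddSubgroup.sub_mem _ hpq (AddSubgroup.zsmul_mem _ (AddSubgroup.subset_closure hc) s)
  obtain ⟨p', hp'S, hp'a, hp'b, hp'q⟩ : ∃ p' ∈ S, IsWide Q p' a ∧ IsWide Q p' b ∧
      q - p' ∈ AddSubgroup.closure {a, b} := by
    rcases isWide_or_isWide hab hpM with hpa | hpb
    · obtain ⟨s, hs, hsa, hsb⟩ := hS.exists_add_zsmul_isWide hsym ha haQ hab hpa hp
      exact ⟨_, hs, hsa, hsb, hL s a (by simp)⟩
    · obtain ⟨s, hs, hsb, hsa⟩ := hS.exists_add_zsmul_isWide hsym hb hbQ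
        (by rwa [cross_anticomm, neg_ne_zero]) hpb hp
      exact ⟨_, hs, hsa, hsb, hL s b (by simp)⟩
  rcases isWide_or_isWide hab hqM with hqa | hqb
  · exact hS.mem_of_isWide_of_isWide hsym hb ha hbQ haQ hp'b hqa hp'S
      (by rwa [Set.pair_comm])
  · exact hS.mem_of_isWide_of_isWide hsym ha hb haQ hbQ hp'a hqb hp'S hp'q

lemma exists_mem_lt_normSq_of_lt_normSq {G : Set (ℤ × ℤ)} {L : AddSubgroup (ℤ × ℤ)}
    {Q : ℤ} {w : ℤ × ℤ} (hS : IsForcingClosed F S) (hGF : G ⊆ F) (hGL : G ⊆ L)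
    (hGQ : ∀ g ∈ G, normSq g ≤ Q) (hGsym : ∀ g ∈ G, -g ∈ G)
    (hG : ∀ q ≠ 0, ∃ g ∈ G, cross q g ≠ 0) (hw : w ∈ S) (hwQ : Q < normSq w) (B : ℤ) :
    ∃ w' ∈ S, w' - w ∈ L ∧ B < normSq w' := by
  have hQ : 0 ≤ Q := by
    obtain ⟨g, hg, -⟩ := hG (1, 0) (by simp)
    exact (normSq_nonneg g).trans (hGQ g hg)
  have ascend : ∀ n : ℕ, ∃ w' ∈ S, w' - w ∈ L ∧ normSq w + n ≤ normSq w' := by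
    intro n
    induction n with
    | zero => exact ⟨w, hw, by simp, by simp⟩
    | succ n ih =>
      obtain ⟨w', hw'S, hw'L, hw'N⟩ := ih
      have hw'0 : w' ≠ 0 := by rintro rfl; rw [normSq_zero] at hw'N; omega
      obtain ⟨g, hg, hw'g, hle⟩ := exists_mem_cross_ne_zero_normSq_add_le hGsym hG hw'0
      have hg0 := normSq_pos (right_ne_zero_of_cross_ne_zero hw'g)
      have hgQ := hGQ g hg
      refine ⟨w' + g, hS w' hw'S g (hGF hg) (by omega) hw'g, ?_, by push_cast; omega⟩
      rw [add_sub_right_comm]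
      exact L.add_mem hw'L (hGL hg)
  obtain ⟨w', hw'S, hw'L, hw'N⟩ := ascend (B + 1 - normSq w).toNat
  exact ⟨w', hw'S, hw'L, by omega⟩

lemma mem_of_ne_zero {M : ℤ} {q : ℤ × ℤ} (hS : IsForcingClosed F S)
    (hsym : ∀ f ∈ F, -f ∈ F) (hF : ∀ q ≠ 0, ∃ f ∈ F, cross q f ≠ 0)
    (hM : ∀ p, M < normSq p → p ∈ S) (hq : q ≠ 0) : q ∈ S := by
  suffices descend : ∀ n : ℕ, ∀ q ≠ 0, M < normSq q + n → q ∈ S from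
    descend _ q hq (by omega : M < normSq q + (M + 1 - normSq q).toNat)
  intro n
  induction n with
  | zero => exact fun q _ hqM => hM q (by simpa using hqM)
  | succ n ih =>
    intro q hq hqM
    obtain ⟨f, hf, hqf, hle⟩ := exists_mem_cross_ne_zero_normSq_add_le hsym hF hq
    have hf0 := normSq_pos (right_ne_zero_of_cross_ne_zero hqf)
    have hq0 := normSq_pos hq
    have hqf_mem : q + f ∈ S :=
      ih _ (by rintro h; rw [h, normSq_zero] at hle; omega) (by push_cast at hqM; omega)
    simpa using hS.sub_mem hsym hqf_mem hf (by omega)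
      (by rwa [cross_add_left, cross_self, add_zero])

lemma exists_mem_closure_pair_lt_normSq {a b : ℤ × ℤ} (hS : IsForcingClosed F S)
    (hsym : ∀ f ∈ F, -f ∈ F) (hFS : F ⊆ S) (ha : a ∈ F) (hb : b ∈ F)
    (hab : cross a b ≠ 0) (hNab : normSq a ≠ normSq b) (B : ℤ) :
    ∃ w ∈ S, w ∈ AddSubgroup.closure {a, b} ∧ B < normSq w := by
  set L := AddSubgroup.closure ({a, b} : Set (ℤ × ℤ))
  set Q := max (normSq a) (normSq b)
  have haL : a ∈ L := AddSubgroup.subset_closure (by simp)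
  have hbL : b ∈ L := AddSubgroup.subset_closure (by simp)
  have hNa : 0 < normSq a := normSq_pos (by rintro rfl; simp [cross] at hab)
  have hNb := normSq_pos (right_ne_zero_of_cross_ne_zero hab)
  obtain ⟨w, hwS, hwL, hwQ⟩ : ∃ w ∈ S, w ∈ L ∧ Q < normSq w := by
    rcases le_total 0 (dot a b) with h | h
    · have := normSq_add_le_of_dot_nonneg h
      exact ⟨a + b, hS a (hFS ha) b hb hNab hab, L.add_mem haL hbL,
        max_lt (by omega) (by omega)⟩
    · have := normSq_add_le_of_dot_nonneg (p := a) (q := -b) (by rw [dot_neg_right]; omega)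
      rw [normSq_neg, ← sub_eq_add_neg] at this
      exact ⟨a - b, hS.sub_mem hsym (hFS ha) hb hNab hab, L.sub_mem haL hbL,
        max_lt (by omega) (by omega)⟩
  set G : Set (ℤ × ℤ) := {g | g ∈ F ∧ g ∈ L ∧ normSq g ≤ Q}
  have hG : ∀ q ≠ 0, ∃ g ∈ G, cross q g ≠ 0 := by
    intro q hq
    rcases cross_ne_zero_or_cross_ne_zero hab hq with h | h
    · exact ⟨a, ⟨ha, haL, le_max_left _ _⟩, h⟩
    · exact ⟨b, ⟨hb, hbL, le_max_right _ _⟩, h⟩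
  have hGsym : ∀ g ∈ G, -g ∈ G := fun g hg =>
    ⟨hsym g hg.1, L.neg_mem hg.2.1, (normSq_neg g).trans_le hg.2.2⟩
  obtain ⟨w', hw'S, hw'L, hw'B⟩ := hS.exists_mem_lt_normSq_of_lt_normSq (fun g hg => hg.1)
    (fun g hg => hg.2.1) (fun g hg => hg.2.2) hGsym hG hwS hwQ B
  exact ⟨w', hw'S, by simpa using L.add_mem hw'L hwL, hw'B⟩

lemma exists_mem_sub_add_mem {L : AddSubgroup (ℤ × ℤ)} {M : ℤ} {c f y : ℤ × ℤ}
    (hS : IsForcingClosed F S) (hM : 0 ≤ M)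
    (hfill : ∀ q, q - y ∈ L → M < normSq q → q ∈ S) (hf : f ∈ F) (hc : c ∈ L)
    (hcf : cross c f ≠ 0) : ∃ q ∈ S, q - (f + y) ∈ L ∧ M < normSq q := by
  -- `cross (q + f) f = cross q f`, so a large cross product makes both `q` and `q + f` long.
  obtain ⟨s, hs⟩ := exists_lt_cross_sq hcf y ((M + normSq f) * normSq f)
  have hNf := normSq_nonneg f
  have hqf : cross (y + s • c) f ≠ 0 := by
    intro h
    rw [h] at hs
    nlinarith
  have hq := lt_normSq_of_mul_lt_cross_sq hs
  have hqf' := lt_normSq_of_mul_lt_cross_sq (p := y + s • c + f) (q := f)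
    (by rwa [cross_add_left, cross_self, add_zero])
  have hqS := hfill (y + s • c) (by rw [add_sub_cancel_left]; exact L.zsmul_mem hc s)
    (by omega)
  refine ⟨_, hS _ hqS f hf (by omega) hqf, ?_, by omega⟩
  simpa [add_sub_add_comm] using L.zsmul_mem hc s

lemma exists_mem_sub_mem_closure_pair_add {Q : ℤ} {a b f y : ℤ × ℤ}
    (hS : IsForcingClosed F S) (hsym : ∀ f ∈ F, -f ∈ F) (ha : a ∈ F) (hb : b ∈ F)
    (haQ : normSq a ≤ Q) (hbQ : normSq b ≤ Q) (hab : cross a b ≠ 0) (hf : f ∈ F)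
    (hy : ∃ p ∈ S, p - y ∈ AddSubgroup.closure {a, b} ∧
      4 * Q * normSq a * normSq b < normSq p) :
    ∃ q ∈ S, q - (f + y) ∈ AddSubgroup.closure {a, b} ∧
      4 * Q * normSq a * normSq b < normSq q := by
  obtain ⟨p, hpS, hpL, hpM⟩ := hy
  by_cases hf0 : f = 0
  · exact ⟨p, hpS, by rwa [hf0, zero_add], hpM⟩
  have hfill : ∀ q, q - y ∈ AddSubgroup.closure {a, b} →
      4 * Q * normSq a * normSq b < normSq q → q ∈ S := fun q hqL hqM =>
    hS.mem_of_lt_normSq hsym ha hb haQ hbQ hab hpS hpM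
      (by simpa using AddSubgroup.sub_mem _ hqL hpL) hqM
  have hM : 0 ≤ 4 * Q * normSq a * normSq b := by
    have := (normSq_nonneg a).trans haQ
    have := normSq_nonneg a
    have := normSq_nonneg b
    positivity
  rcases cross_ne_zero_or_cross_ne_zero hab hf0 with h | h
  · exact hS.exists_mem_sub_add_mem (c := a) hM hfill hf
      (AddSubgroup.subset_closure (by simp)) (by rwa [cross_anticomm, neg_ne_zero])
  · exact hS.exists_mem_sub_add_mem (c := b) hM hfill hf
      (AddSubgroup.subset_closure (by simp)) (by rwa [cross_anticomm, neg_ne_zero])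

theorem exists_forall_lt_normSq_mem {a b : ℤ × ℤ} (hS : IsForcingClosed F S)
    (hsym : ∀ f ∈ F, -f ∈ F) (hFS : F ⊆ S) (hF : AddSubgroup.closure F = ⊤) (ha : a ∈ F)
    (hb : b ∈ F) (hab : cross a b ≠ 0) (hNab : normSq a ≠ normSq b) :
    ∃ M, ∀ q, M < normSq q → q ∈ S := by
  set Q := max (normSq a) (normSq b)
  have haQ : normSq a ≤ Q := le_max_left _ _
  have hbQ : normSq b ≤ Q := le_max_right _ _
  have hcoset : ∀ y, ∃ p ∈ S, p - y ∈ AddSubgroup.closure {a, b} ∧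
      4 * Q * normSq a * normSq b < normSq p := by
    intro y
    induction (hF ▸ AddSubgroup.mem_top y : y ∈ AddSubgroup.closure F) using
      AddSubgroup.closure_induction_left with
    | zero => simpa using hS.exists_mem_closure_pair_lt_normSq hsym hFS ha hb hab hNab _
    | add_left f hf y _ ih =>
      exact hS.exists_mem_sub_mem_closure_pair_add hsym ha hb haQ hbQ hab hf ih
    | neg_add_cancel f hf y _ ih =>
      exact hS.exists_mem_sub_mem_closure_pair_add hsym ha hb haQ hbQ hab (hsym f hf) ih
  refine ⟨4 * Q * normSq a * normSq b, fun q hqM => ?_⟩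
  obtain ⟨p, hpS, hpL, hpM⟩ := hcoset q
  exact hS.mem_of_lt_normSq hsym ha hb haQ hbQ hab hpS hpM
    (by simpa using AddSubgroup.neg_mem _ hpL) hqM

end IsForcingClosed

lemma exists_mem_cross_ne_zero {F : Set (ℤ × ℤ)} (hF : AddSubgroup.closure F = ⊤)
    {q : ℤ × ℤ} (hq : q ≠ 0) : ∃ f ∈ F, cross q f ≠ 0 := by
  by_contra! h
  let crossHom : ℤ × ℤ →+ ℤ := AddMonoidHom.mk' (cross q) fun x y => by
    simp only [cross, Prod.fst_add, Prod.snd_add]; ring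
  have hker : AddSubgroup.closure F ≤ crossHom.ker := (AddSubgroup.closure_le _).mpr h
  rw [hF] at hker
  have : cross q (-q.2, q.1) = normSq q := by simp only [cross, normSq]; ring
  exact (normSq_pos hq).ne' (this ▸ hker (AddSubgroup.mem_top _))

lemma exists_cross_ne_zero_normSq_ne {F : Set (ℤ × ℤ)} (hF0 : (0 : ℤ × ℤ) ∉ F)
    (hF : ∀ q ≠ 0, ∃ f ∈ F, cross q f ≠ 0)
    (hnorm : ∃ k ∈ F, ∃ j ∈ F, normSq k ≠ normSq j) :
    ∃ a ∈ F, ∃ b ∈ F, cross a b ≠ 0 ∧ normSq a ≠ normSq b := by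
  obtain ⟨k, hk, j, hj, hkj⟩ := hnorm
  by_cases hcross : cross k j = 0
  · have hk0 : k ≠ 0 := fun h => hF0 (h ▸ hk)
    have hj0 : j ≠ 0 := fun h => hF0 (h ▸ hj)
    obtain ⟨m, hm, hkm⟩ := hF k hk0
    by_cases hmk : normSq k = normSq m
    · refine ⟨j, hj, m, hm, fun hjm => hkm ?_, fun h => hkj (hmk.trans h.symm)⟩
      exact cross_eq_zero_of_cross_eq_zero hj0 (by rw [cross_anticomm, hcross, neg_zero]) hjm
    · exact ⟨k, hk, m, hm, hkm, hmk⟩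
  · exact ⟨k, hk, j, hj, hcross, hkj⟩

end ForcedModes

open ForcedModes

theorem iUnion_forced_modes_eq_nonzero_general
    (F : Set (ℤ × ℤ)) (hF0 : (0 : ℤ × ℤ) ∉ F)
    (hFsym : ∀ k ∈ F, -k ∈ F)
    (hFnorm : ∃ k ∈ F, ∃ j ∈ F, k.1 ^ 2 + k.2 ^ 2 ≠ j.1 ^ 2 + j.2 ^ 2)
    (hFgen : AddSubgroup.closure F = ⊤)
    (A : ℕ → Set (ℤ × ℤ))
    (hA0 : A 0 = F)
    (hAs : ∀ n, A (n + 1) = A n ∪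
      {p | ∃ k ∈ A n, ∃ j ∈ F,
        k.1 ^ 2 + k.2 ^ 2 ≠ j.1 ^ 2 + j.2 ^ 2 ∧
        k.1 * (-j.2) + k.2 * j.1 ≠ 0 ∧ p = k + j}) :
    (⋃ n, A n) = {p : ℤ × ℤ | p ≠ 0} := by
  have hS : IsForcingClosed F (⋃ n, A n) := by
    intro k hk j hj hkj hcross
    obtain ⟨n, hn⟩ := Set.mem_iUnion.mp hk
    refine Set.mem_iUnion.mpr ⟨n + 1, hAs n ▸ Or.inr ⟨k, hn, j, hj, hkj, ?_, rfl⟩⟩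
    contrapose! hcross
    simp only [cross]
    linarith
  have hA : ∀ n, ∀ p ∈ A n, p ≠ 0 := by
    intro n
    induction n with
    | zero => exact fun p hp h => hF0 (h ▸ hA0 ▸ hp)
    | succ n ih =>
      rw [hAs n]
      rintro p (hp | ⟨k, -, j, -, hkj, -, rfl⟩) h
      · exact ih p hp h
      · exact hkj (by rw [eq_neg_of_add_eq_zero_left h, Prod.fst_neg, Prod.snd_neg]; ring)
  have hspan : ∀ q ≠ 0, ∃ f ∈ F, cross q f ≠ 0 := fun _ => exists_mem_cross_ne_zero hFgen
  obtain ⟨a, ha, b, hb, hab, hNab⟩ := exists_cross_ne_zero_normSq_ne hF0 hspan hFnorm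
  obtain ⟨M, hM⟩ := hS.exists_forall_lt_normSq_mem hFsym
    (fun f hf => Set.mem_iUnion.mpr ⟨0, hA0 ▸ hf⟩) hFgen ha hb hab hNab
  ext p
  refine ⟨fun hp => ?_, fun hp => hS.mem_of_ne_zero hFsym hspan hM hp⟩
  obtain ⟨n, hn⟩ := Set.mem_iUnion.mp hp
  exact hA n p hn

/-- **Propagation of forced modes to all of `ℤ² ∖ {0}`.**
Let `F ⊆ ℤ² ∖ {0}` be a finite symmetric set containing two vectors of different Euclidean
norms and generating `ℤ²` as a group.  Define `A₀ := F` and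
`A_{n+1} := A_n ∪ {k + j : k ∈ A_n, j ∈ F, |k| ≠ |j|, k·j^⊥ ≠ 0}`.
Then `⋃ₙ Aₙ = ℤ² ∖ {0}`. -/
theorem iUnion_forced_modes_eq_nonzero
    (F : Set (ℤ × ℤ)) (hFfin : F.Finite) (hF0 : (0 : ℤ × ℤ) ∉ F)
    (hFsym : ∀ k ∈ F, -k ∈ F)
    (hFnorm : ∃ k ∈ F, ∃ j ∈ F, k.1 ^ 2 + k.2 ^ 2 ≠ j.1 ^ 2 + j.2 ^ 2)
    (hFgen : AddSubgroup.closure F = ⊤)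
    (A : ℕ → Set (ℤ × ℤ))
    (hA0 : A 0 = F)
    (hAs : ∀ n, A (n + 1) = A n ∪
      {p | ∃ k ∈ A n, ∃ j ∈ F,
        k.1 ^ 2 + k.2 ^ 2 ≠ j.1 ^ 2 + j.2 ^ 2 ∧
        k.1 * (-j.2) + k.2 * j.1 ≠ 0 ∧ p = k + j}) :
    (⋃ n, A n) = {p : ℤ × ℤ | p ≠ 0} :=
  iUnion_forced_modes_eq_nonzero_general F hF0 hFsym hFnorm hFgen A hA0 hAs
end

section
/- Let F ⊆ ℤ² ∖ {(0,0)} be a finite set with F = −F, and let A ⊆ ℤ² ∖ {(0,0)} satisfy A = −A. For l, m ∈ ℤ² ∖ {(0,0)} define B_{l,m} := u_m·∇e_l + u_l·∇e_m, a smooth function ℝ² → ℝ. Then for every k ∈ A and j ∈ F with |k| ≠ |j| and k·j^⊥ ≠ 0, the function e_{k+j} belongs to the linear span over ℝ (inside the real vector space of functions ℝ² → ℝ) of the set {e_l : l ∈ A} ∪ {B_{l,j'} : l ∈ A, j' ∈ F}; equivalently, span({e_l : l ∈ A} ∪ {B_{l,j'} : l ∈ A, j' ∈ F}) ⊇ span({e_{k+j}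 : k ∈ A, j ∈ F, |k| ≠ |j|, k·j^⊥ ≠ 0}). -/
open Real

/-- The real Fourier basis function `e_k` on `ℝ²`:
`e_k(x) = sin(k·x)` if `k > 0` lexicographically, and `cos(k·x)` otherwise. -/
noncomputable def eFun (k : ℤ × ℤ) (x : ℝ × ℝ) : ℝ :=
  if 0 < k.1 ∨ (k.1 = 0 ∧ 0 < k.2) then
    Real.sin ((k.1 : ℝ) * x.1 + (k.2 : ℝ) * x.2)
  else
    Real.cos ((k.1 : ℝ) * x.1 + (k.2 : ℝ) * x.2)

/-- The divergence-free velocity field `u_k := ∇^⊥ Δ^{-1} e_k = -|k|^{-2} ∇^⊥ e_k`,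
where `∇^⊥ f = (-∂₂ f, ∂₁ f)`. -/
noncomputable def uFun (k : ℤ × ℤ) (x : ℝ × ℝ) : ℝ × ℝ :=
  (-(((k.1 : ℝ) ^ 2 + (k.2 : ℝ) ^ 2)⁻¹)) •
    (-(fderiv ℝ (eFun k) x (0, 1)), fderiv ℝ (eFun k) x (1, 0))

/-- The symmetrized transport coefficient `B_{l,m} := u_m · ∇e_l + u_l · ∇e_m`. -/
noncomputable def BFun (l m : ℤ × ℤ) (x : ℝ × ℝ) : ℝ :=
  fderiv ℝ (eFun l) x (uFun m x) + fderiv ℝ (eFun m) x (uFun l x)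

lemma hasFDerivAt_ip (k : ℤ × ℤ) (x : ℝ × ℝ) :
    HasFDerivAt (fun x : ℝ × ℝ => (k.1 : ℝ) * x.1 + (k.2 : ℝ) * x.2)
      ((k.1 : ℝ) • ContinuousLinearMap.fst ℝ ℝ ℝ + (k.2 : ℝ) • ContinuousLinearMap.snd ℝ ℝ ℝ) x :=
  (hasFDerivAt_fst.const_mul _).add (hasFDerivAt_snd.const_mul _)

lemma fderiv_eFun (k : ℤ × ℤ) (x v : ℝ × ℝ) :
    fderiv ℝ (eFun k) x v =
      (if 0 < k.1 ∨ (k.1 = 0 ∧ 0 < k.2) then Real.cos ((k.1:ℝ)*x.1 + (k.2:ℝ)*x.2)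
       else -Real.sin ((k.1:ℝ)*x.1 + (k.2:ℝ)*x.2)) * ((k.1:ℝ)*v.1 + (k.2:ℝ)*v.2) := by
  by_cases h : 0 < k.1 ∨ (k.1 = 0 ∧ 0 < k.2)
  · have he : eFun k = fun x : ℝ×ℝ => Real.sin ((k.1:ℝ)*x.1 + (k.2:ℝ)*x.2) := by
      funext y; simp [eFun, h]
    rw [he, ((hasFDerivAt_ip k x).sin).fderiv, if_pos h]
    simp [smul_eq_mul]; ring
  · have he : eFun k = fun x : ℝ×ℝ => Real.cos ((k.1:ℝ)*x.1 + (k.2:ℝ)*x.2) := by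
      funext y; simp [eFun, h]
    rw [he, ((hasFDerivAt_ip k x).cos).fderiv, if_neg h]
    simp [smul_eq_mul]; ring

lemma BFun_eval (l m : ℤ × ℤ) (x : ℝ × ℝ) :
    BFun l m x =
      (if 0 < l.1 ∨ (l.1 = 0 ∧ 0 < l.2) then Real.cos ((l.1:ℝ)*x.1+(l.2:ℝ)*x.2)
        else -Real.sin ((l.1:ℝ)*x.1+(l.2:ℝ)*x.2)) *
      (if 0 < m.1 ∨ (m.1 = 0 ∧ 0 < m.2) then Real.cos ((m.1:ℝ)*x.1+(m.2:ℝ)*x.2)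
        else -Real.sin ((m.1:ℝ)*x.1+(m.2:ℝ)*x.2)) *
      ((l.1:ℝ)*(m.2:ℝ) - (l.2:ℝ)*(m.1:ℝ)) *
      ((((m.1:ℝ)^2+(m.2:ℝ)^2))⁻¹ - (((l.1:ℝ)^2+(l.2:ℝ)^2))⁻¹) := by
  simp only [BFun, uFun, fderiv_eFun, Prod.smul_mk, smul_eq_mul, Prod.fst, Prod.snd]
  ring

lemma lexpos_neg {n : ℤ × ℤ} (hn : n ≠ 0)
    (h : ¬(0 < n.1 ∨ (n.1 = 0 ∧ 0 < n.2))) :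
    0 < (-n).1 ∨ ((-n).1 = 0 ∧ 0 < (-n).2) := by
  have hn' : ¬(n.1 = 0 ∧ n.2 = 0) := by
    rintro ⟨h1, h2⟩; exact hn (Prod.ext h1 h2)
  rw [Prod.fst_neg, Prod.snd_neg]
  omega

lemma lexpos_neg' {n : ℤ × ℤ}
    (h : 0 < n.1 ∨ (n.1 = 0 ∧ 0 < n.2)) :
    ¬(0 < (-n).1 ∨ ((-n).1 = 0 ∧ 0 < (-n).2)) := by
  rw [Prod.fst_neg, Prod.snd_neg]
  omega


set_option maxHeartbeats 1000000 in
/-- **New modes generated by the nonlinearity.**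
For finite symmetric `F ⊆ ℤ² ∖ {0}` and symmetric `A ⊆ ℤ² ∖ {0}`: for every `k ∈ A` and
`j ∈ F` with `|k| ≠ |j|` and `k·j^⊥ ≠ 0`, the function `e_{k+j}` lies in the real linear
span of `{e_l : l ∈ A} ∪ {B_{l,j'} : l ∈ A, j' ∈ F}`. -/
theorem eFun_add_mem_span
    (F A : Set (ℤ × ℤ)) (hFfin : F.Finite)
    (hF0 : (0 : ℤ × ℤ) ∉ F) (hFsym : ∀ j ∈ F, -j ∈ F)
    (hA0 : (0 : ℤ × ℤ) ∉ A) (hAsym : ∀ k ∈ A, -k ∈ A)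
    (k j : ℤ × ℤ) (hk : k ∈ A) (hj : j ∈ F)
    (hnorm : k.1 ^ 2 + k.2 ^ 2 ≠ j.1 ^ 2 + j.2 ^ 2)
    (hperp : k.1 * (-j.2) + k.2 * j.1 ≠ 0) :
    eFun (k + j) ∈ Submodule.span ℝ
      ((fun l => eFun l) '' A ∪ {g | ∃ l ∈ A, ∃ m ∈ F, g = BFun l m}) := by
  set V := Submodule.span ℝ
      ((fun l => eFun l) '' A ∪ {g | ∃ l ∈ A, ∃ m ∈ F, g = BFun l m}) with hVdef
  have hBmem : ∀ l ∈ A, ∀ m ∈ F, BFun l m ∈ V := fun l hl m hm =>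
    Submodule.subset_span (Or.inr ⟨l, hl, m, hm, rfl⟩)
  have hk0 : k ≠ 0 := fun h => hA0 (h ▸ hk)
  have hj0 : j ≠ 0 := fun h => hF0 (h ▸ hj)
  have hD : ((k.1:ℝ)*(j.2:ℝ) - (k.2:ℝ)*(j.1:ℝ)) ≠ 0 := by
    have : (k.1*j.2 - k.2*j.1 : ℤ) ≠ 0 := by
      intro h; exact hperp (by linear_combination -h)
    exact_mod_cast this
  have hsk : ((k.1:ℝ)^2+(k.2:ℝ)^2) ≠ 0 := by
    have h1 : k.1 ≠ 0 ∨ k.2 ≠ 0 := by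
      rcases k with ⟨a,b⟩; simp only [Prod.mk.injEq, ne_eq, Prod.ext_iff] at hk0 ⊢; tauto
    have : (k.1:ℝ) ≠ 0 ∨ (k.2:ℝ) ≠ 0 := by exact_mod_cast h1
    rcases this with h | h <;> positivity
  have hsj : ((j.1:ℝ)^2+(j.2:ℝ)^2) ≠ 0 := by
    have h1 : j.1 ≠ 0 ∨ j.2 ≠ 0 := by
      rcases j with ⟨a,b⟩; simp only [Prod.mk.injEq, ne_eq, Prod.ext_iff] at hj0 ⊢; tauto
    have : (j.1:ℝ) ≠ 0 ∨ (j.2:ℝ) ≠ 0 := by exact_mod_cast h1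
    rcases this with h | h <;> positivity
  have hdiff : ((k.1:ℝ)^2+(k.2:ℝ)^2) - ((j.1:ℝ)^2+(j.2:ℝ)^2) ≠ 0 := by
    have : ((k.1:ℝ)^2+(k.2:ℝ)^2) ≠ ((j.1:ℝ)^2+(j.2:ℝ)^2) := by exact_mod_cast hnorm
    exact sub_ne_zero.mpr this
  have B1 : BFun k j ∈ V := hBmem k hk j hj
  have B2 : BFun k (-j) ∈ V := hBmem k hk (-j) (hFsym j hj)
  have B3 : BFun (-k) j ∈ V := hBmem (-k) (hAsym k hk) j hj
  have B4 : BFun (-k) (-j) ∈ V := hBmem (-k) (hAsym k hk) (-j) (hFsym j hj)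
  have key : ∀ (a b : ℝ) (f g : (ℝ×ℝ) → ℝ), f ∈ V → g ∈ V →
      (∀ x, eFun (k+j) x = a * f x + b * g x) → eFun (k+j) ∈ V := by
    intro a b f g hf hg h
    have : eFun (k+j) = a • f + b • g := funext fun x => by
      simpa [Pi.add_apply, Pi.smul_apply, smul_eq_mul] using h x
    rw [this]
    exact V.add_mem (V.smul_mem a hf) (V.smul_mem b hg)
  by_cases hkp : 0 < k.1 ∨ (k.1 = 0 ∧ 0 < k.2) <;>
    by_cases hjp : 0 < j.1 ∨ (j.1 = 0 ∧ 0 < j.2) <;>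
    by_cases hsp : 0 < (k+j).1 ∨ ((k+j).1 = 0 ∧ 0 < (k+j).2)
  -- case T T T
  · have hnk' : ¬(0 < -k.1 ∨ (-k.1 = 0 ∧ 0 < -k.2)) := by simpa using lexpos_neg' hkp
    have hnj' : ¬(0 < -j.1 ∨ (-j.1 = 0 ∧ 0 < -j.2)) := by simpa using lexpos_neg' hjp
    have hsp' : 0 < k.1 + j.1 ∨ (k.1 + j.1 = 0 ∧ 0 < k.2 + j.2) := by simpa using hsp
    refine key
      (-((((k.1:ℝ)^2+(k.2:ℝ)^2) * ((j.1:ℝ)^2+(j.2:ℝ)^2) /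
        (((k.1:ℝ)*(j.2:ℝ) - (k.2:ℝ)*(j.1:ℝ)) * (((k.1:ℝ)^2+(k.2:ℝ)^2) - ((j.1:ℝ)^2+(j.2:ℝ)^2))))))
      (-((((k.1:ℝ)^2+(k.2:ℝ)^2) * ((j.1:ℝ)^2+(j.2:ℝ)^2) /
        (((k.1:ℝ)*(j.2:ℝ) - (k.2:ℝ)*(j.1:ℝ)) * (((k.1:ℝ)^2+(k.2:ℝ)^2) - ((j.1:ℝ)^2+(j.2:ℝ)^2))))))
      (BFun k (-j)) (BFun (-k) j) B2 B3 ?_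
    intro x
    rw [BFun_eval, BFun_eval]
    simp only [eFun, hkp, hnk', hjp, hnj', hsp', if_true, if_false, iff_true,
      Prod.fst_neg, Prod.snd_neg, Prod.fst_add, Prod.snd_add, Int.cast_neg, Int.cast_add,
      neg_mul, ← neg_add, Real.sin_neg, Real.cos_neg, neg_neg]
    rw [show ((k.1:ℝ)+(j.1:ℝ))*x.1+((k.2:ℝ)+(j.2:ℝ))*x.2
        = ((k.1:ℝ)*x.1+(k.2:ℝ)*x.2) + ((j.1:ℝ)*x.1+(j.2:ℝ)*x.2) from by ring,
      Real.sin_add]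
    field_simp
    ring
  -- case T T F
  · have hnk' : ¬(0 < -k.1 ∨ (-k.1 = 0 ∧ 0 < -k.2)) := by simpa using lexpos_neg' hkp
    have hnj' : ¬(0 < -j.1 ∨ (-j.1 = 0 ∧ 0 < -j.2)) := by simpa using lexpos_neg' hjp
    have hsp' : ¬(0 < k.1 + j.1 ∨ (k.1 + j.1 = 0 ∧ 0 < k.2 + j.2)) := by simpa using hsp
    refine key
      (((((k.1:ℝ)^2+(k.2:ℝ)^2) * ((j.1:ℝ)^2+(j.2:ℝ)^2) /
        (((k.1:ℝ)*(j.2:ℝ) - (k.2:ℝ)*(j.1:ℝ)) * (((k.1:ℝ)^2+(k.2:ℝ)^2) - ((j.1:ℝ)^2+(j.2:ℝ)^2))))))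
      (-((((k.1:ℝ)^2+(k.2:ℝ)^2) * ((j.1:ℝ)^2+(j.2:ℝ)^2) /
        (((k.1:ℝ)*(j.2:ℝ) - (k.2:ℝ)*(j.1:ℝ)) * (((k.1:ℝ)^2+(k.2:ℝ)^2) - ((j.1:ℝ)^2+(j.2:ℝ)^2))))))
      (BFun k j) (BFun (-k) (-j)) B1 B4 ?_
    intro x
    rw [BFun_eval, BFun_eval]
    simp only [eFun, hkp, hnk', hjp, hnj', hsp', if_true, if_false, iff_true,
      Prod.fst_neg, Prod.snd_neg, Prod.fst_add, Prod.snd_add, Int.cast_neg, Int.cast_add,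
      neg_mul, ← neg_add, Real.sin_neg, Real.cos_neg, neg_neg]
    rw [show ((k.1:ℝ)+(j.1:ℝ))*x.1+((k.2:ℝ)+(j.2:ℝ))*x.2
        = ((k.1:ℝ)*x.1+(k.2:ℝ)*x.2) + ((j.1:ℝ)*x.1+(j.2:ℝ)*x.2) from by ring,
      Real.cos_add]
    field_simp
    ring
  -- case T F T
  · have hnk' : ¬(0 < -k.1 ∨ (-k.1 = 0 ∧ 0 < -k.2)) := by simpa using lexpos_neg' hkp
    have hpj' : (0 < -j.1 ∨ (-j.1 = 0 ∧ 0 < -j.2)) := by simpa using lexpos_neg hj0 hjp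
    have hsp' : 0 < k.1 + j.1 ∨ (k.1 + j.1 = 0 ∧ 0 < k.2 + j.2) := by simpa using hsp
    refine key
      (((((k.1:ℝ)^2+(k.2:ℝ)^2) * ((j.1:ℝ)^2+(j.2:ℝ)^2) /
        (((k.1:ℝ)*(j.2:ℝ) - (k.2:ℝ)*(j.1:ℝ)) * (((k.1:ℝ)^2+(k.2:ℝ)^2) - ((j.1:ℝ)^2+(j.2:ℝ)^2))))))
      (-((((k.1:ℝ)^2+(k.2:ℝ)^2) * ((j.1:ℝ)^2+(j.2:ℝ)^2) /
        (((k.1:ℝ)*(j.2:ℝ) - (k.2:ℝ)*(j.1:ℝ)) * (((k.1:ℝ)^2+(k.2:ℝ)^2) - ((j.1:ℝ)^2+(j.2:ℝ)^2))))))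
      (BFun (-k) (-j)) (BFun k j) B4 B1 ?_
    intro x
    rw [BFun_eval, BFun_eval]
    simp only [eFun, hkp, hnk', hjp, hpj', hsp', if_true, if_false, iff_true,
      Prod.fst_neg, Prod.snd_neg, Prod.fst_add, Prod.snd_add, Int.cast_neg, Int.cast_add,
      neg_mul, ← neg_add, Real.sin_neg, Real.cos_neg, neg_neg]
    rw [show ((k.1:ℝ)+(j.1:ℝ))*x.1+((k.2:ℝ)+(j.2:ℝ))*x.2
        = ((k.1:ℝ)*x.1+(k.2:ℝ)*x.2) + ((j.1:ℝ)*x.1+(j.2:ℝ)*x.2) from by ring,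
      Real.sin_add]
    field_simp
  -- case T F F
  · have hnk' : ¬(0 < -k.1 ∨ (-k.1 = 0 ∧ 0 < -k.2)) := by simpa using lexpos_neg' hkp
    have hpj' : (0 < -j.1 ∨ (-j.1 = 0 ∧ 0 < -j.2)) := by simpa using lexpos_neg hj0 hjp
    have hsp' : ¬(0 < k.1 + j.1 ∨ (k.1 + j.1 = 0 ∧ 0 < k.2 + j.2)) := by simpa using hsp
    refine key
      (-((((k.1:ℝ)^2+(k.2:ℝ)^2) * ((j.1:ℝ)^2+(j.2:ℝ)^2) /
        (((k.1:ℝ)*(j.2:ℝ) - (k.2:ℝ)*(j.1:ℝ)) * (((k.1:ℝ)^2+(k.2:ℝ)^2) - ((j.1:ℝ)^2+(j.2:ℝ)^2))))))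
      (-((((k.1:ℝ)^2+(k.2:ℝ)^2) * ((j.1:ℝ)^2+(j.2:ℝ)^2) /
        (((k.1:ℝ)*(j.2:ℝ) - (k.2:ℝ)*(j.1:ℝ)) * (((k.1:ℝ)^2+(k.2:ℝ)^2) - ((j.1:ℝ)^2+(j.2:ℝ)^2))))))
      (BFun k (-j)) (BFun (-k) j) B2 B3 ?_
    intro x
    rw [BFun_eval, BFun_eval]
    simp only [eFun, hkp, hnk', hjp, hpj', hsp', if_true, if_false, iff_true,
      Prod.fst_neg, Prod.snd_neg, Prod.fst_add, Prod.snd_add, Int.cast_neg, Int.cast_add,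
      neg_mul, ← neg_add, Real.sin_neg, Real.cos_neg, neg_neg]
    rw [show ((k.1:ℝ)+(j.1:ℝ))*x.1+((k.2:ℝ)+(j.2:ℝ))*x.2
        = ((k.1:ℝ)*x.1+(k.2:ℝ)*x.2) + ((j.1:ℝ)*x.1+(j.2:ℝ)*x.2) from by ring,
      Real.cos_add]
    field_simp
    ring
  -- case F T T
  · have hpk' : (0 < -k.1 ∨ (-k.1 = 0 ∧ 0 < -k.2)) := by simpa using lexpos_neg hk0 hkp
    have hnj' : ¬(0 < -j.1 ∨ (-j.1 = 0 ∧ 0 < -j.2)) := by simpa using lexpos_neg' hjp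
    have hsp' : 0 < k.1 + j.1 ∨ (k.1 + j.1 = 0 ∧ 0 < k.2 + j.2) := by simpa using hsp
    refine key
      (((((k.1:ℝ)^2+(k.2:ℝ)^2) * ((j.1:ℝ)^2+(j.2:ℝ)^2) /
        (((k.1:ℝ)*(j.2:ℝ) - (k.2:ℝ)*(j.1:ℝ)) * (((k.1:ℝ)^2+(k.2:ℝ)^2) - ((j.1:ℝ)^2+(j.2:ℝ)^2))))))
      (-((((k.1:ℝ)^2+(k.2:ℝ)^2) * ((j.1:ℝ)^2+(j.2:ℝ)^2) /
        (((k.1:ℝ)*(j.2:ℝ) - (k.2:ℝ)*(j.1:ℝ)) * (((k.1:ℝ)^2+(k.2:ℝ)^2) - ((j.1:ℝ)^2+(j.2:ℝ)^2))))))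
      (BFun (-k) (-j)) (BFun k j) B4 B1 ?_
    intro x
    rw [BFun_eval, BFun_eval]
    simp only [eFun, hkp, hpk', hjp, hnj', hsp', if_true, if_false, iff_true,
      Prod.fst_neg, Prod.snd_neg, Prod.fst_add, Prod.snd_add, Int.cast_neg, Int.cast_add,
      neg_mul, ← neg_add, Real.sin_neg, Real.cos_neg, neg_neg]
    rw [show ((k.1:ℝ)+(j.1:ℝ))*x.1+((k.2:ℝ)+(j.2:ℝ))*x.2
        = ((k.1:ℝ)*x.1+(k.2:ℝ)*x.2) + ((j.1:ℝ)*x.1+(j.2:ℝ)*x.2) from by ring,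
      Real.sin_add]
    field_simp
    ring
  -- case F T F
  · have hpk' : (0 < -k.1 ∨ (-k.1 = 0 ∧ 0 < -k.2)) := by simpa using lexpos_neg hk0 hkp
    have hnj' : ¬(0 < -j.1 ∨ (-j.1 = 0 ∧ 0 < -j.2)) := by simpa using lexpos_neg' hjp
    have hsp' : ¬(0 < k.1 + j.1 ∨ (k.1 + j.1 = 0 ∧ 0 < k.2 + j.2)) := by simpa using hsp
    refine key
      (-((((k.1:ℝ)^2+(k.2:ℝ)^2) * ((j.1:ℝ)^2+(j.2:ℝ)^2) /
        (((k.1:ℝ)*(j.2:ℝ) - (k.2:ℝ)*(j.1:ℝ)) * (((k.1:ℝ)^2+(k.2:ℝ)^2) - ((j.1:ℝ)^2+(j.2:ℝ)^2))))))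
      (-((((k.1:ℝ)^2+(k.2:ℝ)^2) * ((j.1:ℝ)^2+(j.2:ℝ)^2) /
        (((k.1:ℝ)*(j.2:ℝ) - (k.2:ℝ)*(j.1:ℝ)) * (((k.1:ℝ)^2+(k.2:ℝ)^2) - ((j.1:ℝ)^2+(j.2:ℝ)^2))))))
      (BFun k (-j)) (BFun (-k) j) B2 B3 ?_
    intro x
    rw [BFun_eval, BFun_eval]
    simp only [eFun, hkp, hpk', hjp, hnj', hsp', if_true, if_false, iff_true,
      Prod.fst_neg, Prod.snd_neg, Prod.fst_add, Prod.snd_add, Int.cast_neg, Int.cast_add,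
      neg_mul, ← neg_add, Real.sin_neg, Real.cos_neg, neg_neg]
    rw [show ((k.1:ℝ)+(j.1:ℝ))*x.1+((k.2:ℝ)+(j.2:ℝ))*x.2
        = ((k.1:ℝ)*x.1+(k.2:ℝ)*x.2) + ((j.1:ℝ)*x.1+(j.2:ℝ)*x.2) from by ring,
      Real.cos_add]
    field_simp
    ring
  -- case F F T
  · have hpk' : (0 < -k.1 ∨ (-k.1 = 0 ∧ 0 < -k.2)) := by simpa using lexpos_neg hk0 hkp
    have hpj' : (0 < -j.1 ∨ (-j.1 = 0 ∧ 0 < -j.2)) := by simpa using lexpos_neg hj0 hjp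
    have hsp' : 0 < k.1 + j.1 ∨ (k.1 + j.1 = 0 ∧ 0 < k.2 + j.2) := by simpa using hsp
    refine key
      (((((k.1:ℝ)^2+(k.2:ℝ)^2) * ((j.1:ℝ)^2+(j.2:ℝ)^2) /
        (((k.1:ℝ)*(j.2:ℝ) - (k.2:ℝ)*(j.1:ℝ)) * (((k.1:ℝ)^2+(k.2:ℝ)^2) - ((j.1:ℝ)^2+(j.2:ℝ)^2))))))
      (((((k.1:ℝ)^2+(k.2:ℝ)^2) * ((j.1:ℝ)^2+(j.2:ℝ)^2) /
        (((k.1:ℝ)*(j.2:ℝ) - (k.2:ℝ)*(j.1:ℝ)) * (((k.1:ℝ)^2+(k.2:ℝ)^2) - ((j.1:ℝ)^2+(j.2:ℝ)^2))))))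
      (BFun k (-j)) (BFun (-k) j) B2 B3 ?_
    intro x
    rw [BFun_eval, BFun_eval]
    simp only [eFun, hkp, hpk', hjp, hpj', hsp', if_true, if_false, iff_true,
      Prod.fst_neg, Prod.snd_neg, Prod.fst_add, Prod.snd_add, Int.cast_neg, Int.cast_add,
      neg_mul, ← neg_add, Real.sin_neg, Real.cos_neg, neg_neg]
    rw [show ((k.1:ℝ)+(j.1:ℝ))*x.1+((k.2:ℝ)+(j.2:ℝ))*x.2
        = ((k.1:ℝ)*x.1+(k.2:ℝ)*x.2) + ((j.1:ℝ)*x.1+(j.2:ℝ)*x.2) from by ring,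
      Real.sin_add]
    field_simp
    ring
  -- case F F F
  · have hpk' : (0 < -k.1 ∨ (-k.1 = 0 ∧ 0 < -k.2)) := by simpa using lexpos_neg hk0 hkp
    have hpj' : (0 < -j.1 ∨ (-j.1 = 0 ∧ 0 < -j.2)) := by simpa using lexpos_neg hj0 hjp
    have hsp' : ¬(0 < k.1 + j.1 ∨ (k.1 + j.1 = 0 ∧ 0 < k.2 + j.2)) := by simpa using hsp
    refine key
      (((((k.1:ℝ)^2+(k.2:ℝ)^2) * ((j.1:ℝ)^2+(j.2:ℝ)^2) /
        (((k.1:ℝ)*(j.2:ℝ) - (k.2:ℝ)*(j.1:ℝ)) * (((k.1:ℝ)^2+(k.2:ℝ)^2) - ((j.1:ℝ)^2+(j.2:ℝ)^2))))))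
      (-((((k.1:ℝ)^2+(k.2:ℝ)^2) * ((j.1:ℝ)^2+(j.2:ℝ)^2) /
        (((k.1:ℝ)*(j.2:ℝ) - (k.2:ℝ)*(j.1:ℝ)) * (((k.1:ℝ)^2+(k.2:ℝ)^2) - ((j.1:ℝ)^2+(j.2:ℝ)^2))))))
      (BFun (-k) (-j)) (BFun k j) B4 B1 ?_
    intro x
    rw [BFun_eval, BFun_eval]
    simp only [eFun, hkp, hpk', hjp, hpj', hsp', if_true, if_false, iff_true,
      Prod.fst_neg, Prod.snd_neg, Prod.fst_add, Prod.snd_add, Int.cast_neg, Int.cast_add,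
      neg_mul, ← neg_add, Real.sin_neg, Real.cos_neg, neg_neg]
    rw [show ((k.1:ℝ)+(j.1:ℝ))*x.1+((k.2:ℝ)+(j.2:ℝ))*x.2
        = ((k.1:ℝ)*x.1+(k.2:ℝ)*x.2) + ((j.1:ℝ)*x.1+(j.2:ℝ)*x.2) from by ring,
      Real.cos_add]
    field_simp
    ring
end

section
/- There exist constants C, R > 0 such that for all x', y' ∈ ℝ² with x' − y' ∉ 2πℤ² and all a, b ∈ ℝ²: |a| + |b| ≤ C · d(x', y')^{−1} · max_{k ∈ ℤ²∖{(0,0)}, |k| ≤ R} | u_k(x')·a + u_k(y')·b |, where d(x', y') := min_{m ∈ ℤ²} |x' − y' − 2πm| is the distance between x' and y' on the torus (ℝ/2πℤ)². -/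
open Real

/-- The Euclidean norm on `ℝ²`. -/
noncomputable def enorm2 (a : ℝ × ℝ) : ℝ := Real.sqrt (a.1 ^ 2 + a.2 ^ 2)

/-- The Euclidean dot product on `ℝ²`. -/
def dotR (a b : ℝ × ℝ) : ℝ := a.1 * b.1 + a.2 * b.2

/-- The distance on the torus `(ℝ/2πℤ)²`. -/
noncomputable def torusDist (x y : ℝ × ℝ) : ℝ :=
  sInf {t | ∃ m : ℤ × ℤ,
    t = enorm2 (x.1 - y.1 - 2 * π * (m.1 : ℝ), x.2 - y.2 - 2 * π * (m.2 : ℝ))}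


/-!
Write `θ = k·(x' - y')/2`. Up to sign, `u_k` and `u_{-k}` are `|k|⁻² k^⊥` times `cos (k·x)`
and `sin (k·x)`, so a bound `M` on both modes bounds `e^{i k·x'} k^⊥·a + e^{i k·y'} k^⊥·b`;
rotating by the mean phase gives `|k^⊥·(a + b)| |cos θ| ≲ M` and `|k^⊥·(a - b)| |sin θ| ≲ M`.
The modes `(1,0)` and `(2,0)` (and their transposes) bound `a + b` outright, since `cos θ` and
`cos 2θ` are never both small. The modes `(1,0)`, `(0,1)`, `(1,1)` bound `a - b` by
`M / (|sin θ₁| + |sin θ₂|)`: when `|sin θ₁| ≪ |sin θ₂|`, `sin (θ₁ + θ₂)` is comparable to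
`sin θ₂`. Finally `|sin θ₁| + |sin θ₂|` is comparable to the torus distance by Jordan's
inequality.
-/

lemma fderiv_comp_linear_form {g : ℝ → ℝ} {p q : ℝ} {x : ℝ × ℝ}
    (hg : DifferentiableAt ℝ g (p * x.1 + q * x.2)) (w : ℝ × ℝ) :
    fderiv ℝ (fun y : ℝ × ℝ => g (p * y.1 + q * y.2)) x w
      = deriv g (p * x.1 + q * x.2) * (p * w.1 + q * w.2) := by
  have hL : HasFDerivAt (fun y : ℝ × ℝ => p * y.1 + q * y.2)
      (p • ContinuousLinearMap.fst ℝ ℝ ℝ + q • ContinuousLinearMap.snd ℝ ℝ ℝ) x :=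
    (hasFDerivAt_fst.const_mul p).add (hasFDerivAt_snd.const_mul q)
  rw [HasFDerivAt.fderiv (f := fun y : ℝ × ℝ => g (p * y.1 + q * y.2))
    (hg.hasDerivAt.comp_hasFDerivAt x hL)]
  simp only [smul_apply, add_apply,
    ContinuousLinearMap.coe_fst', ContinuousLinearMap.coe_snd', smul_eq_mul]

lemma dotR_uFun (k : ℤ × ℤ) (x c : ℝ × ℝ) :
    dotR (uFun k x) c =
      ((k.1 : ℝ) ^ 2 + (k.2 : ℝ) ^ 2)⁻¹ *
      (if 0 < k.1 ∨ (k.1 = 0 ∧ 0 < k.2) then -cos ((k.1 : ℝ) * x.1 + (k.2 : ℝ) * x.2)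
        else sin ((k.1 : ℝ) * x.1 + (k.2 : ℝ) * x.2)) *
      (-(k.2 : ℝ) * c.1 + (k.1 : ℝ) * c.2) := by
  unfold uFun eFun dotR
  split_ifs <;>
    simp only [fderiv_comp_linear_form differentiableAt_sin, Real.deriv_sin,
      fderiv_comp_linear_form differentiableAt_cos, Real.deriv_cos', Prod.smul_fst,
      Prod.smul_snd, smul_eq_mul] <;>
    ring

lemma fst_ne_zero_or_snd_ne_zero {α β : Type*} [Zero α] [Zero β] {k : α × β} (hk : k ≠ 0) :
    k.1 ≠ 0 ∨ k.2 ≠ 0 := by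
  contrapose! hk
  exact Prod.ext hk.1 hk.2

lemma cast_sq_add_cast_sq_pos {k : ℤ × ℤ} (hk : k ≠ 0) :
    0 < (k.1 : ℝ) ^ 2 + (k.2 : ℝ) ^ 2 := by
  rcases fst_ne_zero_or_snd_ne_zero hk with h | h <;> positivity

lemma abs_inv_mul_le_iff {n X M : ℝ} (hn : 0 < n) : |n⁻¹ * X| ≤ M ↔ |X| ≤ n * M := by
  rw [abs_mul, abs_of_pos (inv_pos.mpr hn), inv_mul_le_iff₀ hn]

lemma mode_pair_bound {k : ℤ × ℤ} (hk : k ≠ 0) {x y a b : ℝ × ℝ} {M : ℝ}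
    (hpos : |dotR (uFun k x) a + dotR (uFun k y) b| ≤ M)
    (hneg : |dotR (uFun (-k) x) a + dotR (uFun (-k) y) b| ≤ M) :
    |cos ((k.1 : ℝ) * x.1 + (k.2 : ℝ) * x.2) * (-(k.2 : ℝ) * a.1 + (k.1 : ℝ) * a.2)
        + cos ((k.1 : ℝ) * y.1 + (k.2 : ℝ) * y.2) * (-(k.2 : ℝ) * b.1 + (k.1 : ℝ) * b.2)|
        ≤ ((k.1 : ℝ) ^ 2 + (k.2 : ℝ) ^ 2) * M ∧
    |sin ((k.1 : ℝ) * x.1 + (k.2 : ℝ) * x.2) * (-(k.2 : ℝ) * a.1 + (k.1 : ℝ) * a.2)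
        + sin ((k.1 : ℝ) * y.1 + (k.2 : ℝ) * y.2) * (-(k.2 : ℝ) * b.1 + (k.1 : ℝ) * b.2)|
        ≤ ((k.1 : ℝ) ^ 2 + (k.2 : ℝ) ^ 2) * M := by
  -- replacing `k` by `-k` swaps the two modes and only flips signs
  wlog h : 0 < k.1 ∨ (k.1 = 0 ∧ 0 < k.2) generalizing k
  · have h' : 0 < (-k).1 ∨ ((-k).1 = 0 ∧ 0 < (-k).2) := by
      have := fst_ne_zero_or_snd_ne_zero hk
      simp only [Prod.fst_neg, Prod.snd_neg]
      omega
    obtain ⟨hc, hs⟩ := this (neg_ne_zero.mpr hk) hneg (by rwa [neg_neg]) h'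
    simp only [Prod.fst_neg, Prod.snd_neg, Int.cast_neg, neg_sq, neg_mul, ← neg_add,
      cos_neg, sin_neg] at hc hs
    constructor
    · rw [← abs_neg]; convert hc using 2; ring
    · convert hs using 2; ring
  have hneg' : ¬(0 < (-k).1 ∨ ((-k).1 = 0 ∧ 0 < (-k).2)) := by
    simp only [Prod.fst_neg, Prod.snd_neg]
    omega
  have hn := cast_sq_add_cast_sq_pos hk
  rw [dotR_uFun, dotR_uFun, if_pos h, if_pos h] at hpos
  rw [dotR_uFun, dotR_uFun, if_neg hneg', if_neg hneg'] at hneg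
  simp only [Prod.fst_neg, Prod.snd_neg, Int.cast_neg, neg_sq, neg_mul, ← neg_add,
    sin_neg] at hneg
  constructor
  · rw [← abs_inv_mul_le_iff hn, ← abs_neg]; convert hpos using 2; ring
  · rw [← abs_inv_mul_le_iff hn]; convert hneg using 2; ring

lemma half_angle_bounds {φ ψ α β E : ℝ} (hcos : |cos φ * α + cos ψ * β| ≤ E)
    (hsin : |sin φ * α + sin ψ * β| ≤ E) :
    |(α + β) * cos ((φ - ψ) / 2)| ≤ 2 * E ∧ |(α - β) * sin ((φ - ψ) / 2)| ≤ 2 * E := by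
  obtain ⟨μ, h, rfl, rfl⟩ : ∃ μ h, φ = μ + h ∧ ψ = μ - h :=
    ⟨(φ + ψ) / 2, (φ - ψ) / 2, by ring, by ring⟩
  rw [show (μ + h - (μ - h)) / 2 = h by ring]
  set C := cos (μ + h) * α + cos (μ - h) * β
  set S := sin (μ + h) * α + sin (μ - h) * β
  -- rotating the pair `(C, S)` by `-μ` isolates the sum and the difference of `α` and `β`
  have hsum : (α + β) * cos h = cos μ * C + sin μ * S := by
    simp only [C, S, cos_add, cos_sub, sin_add, sin_sub]
    linear_combination (-(α + β) * cos h) * sin_sq_add_cos_sq μ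
  have hdiff : (α - β) * sin h = -sin μ * C + cos μ * S := by
    simp only [C, S, cos_add, cos_sub, sin_add, sin_sub]
    linear_combination (-(α - β) * sin h) * sin_sq_add_cos_sq μ
  have hrot : ∀ u v : ℝ, |u| ≤ 1 → |v| ≤ 1 → |u * C + v * S| ≤ 2 * E := fun u v hu hv =>
    calc |u * C + v * S| ≤ |u| * |C| + |v| * |S| := by
          simpa only [abs_mul] using abs_add_le (u * C) (v * S)
      _ ≤ 1 * E + 1 * E := by gcongr
      _ = 2 * E := by ring
  rw [hsum, hdiff]
  exact ⟨hrot _ _ (abs_cos_le_one μ) (abs_sin_le_one μ),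
    hrot _ _ (by rw [abs_neg]; exact abs_sin_le_one μ) (abs_cos_le_one μ)⟩

lemma mode_pair_half_angle_bound {k : ℤ × ℤ} (hk : k ≠ 0) {x y a b : ℝ × ℝ} {M : ℝ}
    (hpos : |dotR (uFun k x) a + dotR (uFun k y) b| ≤ M)
    (hneg : |dotR (uFun (-k) x) a + dotR (uFun (-k) y) b| ≤ M) :
    |((k.1 : ℝ) * (a.2 + b.2) - (k.2 : ℝ) * (a.1 + b.1))
        * cos ((k.1 : ℝ) * ((x.1 - y.1) / 2) + (k.2 : ℝ) * ((x.2 - y.2) / 2))|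
        ≤ 2 * (((k.1 : ℝ) ^ 2 + (k.2 : ℝ) ^ 2) * M) ∧
    |((k.1 : ℝ) * (a.2 - b.2) - (k.2 : ℝ) * (a.1 - b.1))
        * sin ((k.1 : ℝ) * ((x.1 - y.1) / 2) + (k.2 : ℝ) * ((x.2 - y.2) / 2))|
        ≤ 2 * (((k.1 : ℝ) ^ 2 + (k.2 : ℝ) ^ 2) * M) := by
  obtain ⟨hc, hs⟩ := mode_pair_bound hk hpos hneg
  obtain ⟨hsum, hdiff⟩ := half_angle_bounds hc hs
  constructor
  · convert hsum using 3 <;> ring_nf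
  · convert hdiff using 3 <;> ring_nf

lemma abs_le_of_abs_mul_abs_cos_le {U θ M : ℝ} (h₁ : |U| * |cos θ| ≤ 2 * M)
    (h₂ : |U| * |cos (2 * θ)| ≤ 4 * M) : |U| ≤ 8 * M := by
  rcases le_or_gt (1 / 2) |cos θ| with hc | hc
  · nlinarith [abs_nonneg U]
  · have hc2 : 1 / 2 ≤ |cos (2 * θ)| := by
      have : cos θ ^ 2 < 1 / 4 := by nlinarith [abs_nonneg (cos θ), sq_abs (cos θ)]
      rw [cos_two_mul, abs_of_neg (by linarith)]
      linarith
    nlinarith [abs_nonneg U]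

lemma abs_mul_abs_sin_le_of_abs_sin_add {V₁ V₂ θ₁ θ₂ M : ℝ}
    (h₁ : |V₂| * |sin θ₁| ≤ 2 * M) (h₂ : |V₁| * |sin θ₂| ≤ 2 * M)
    (h : |V₂ - V₁| * |sin (θ₁ + θ₂)| ≤ 4 * M) : |V₂| * |sin θ₂| ≤ 8 * M := by
  have hM : 0 ≤ M := by nlinarith [abs_nonneg V₂, abs_nonneg (sin θ₁)]
  rcases le_or_gt |sin θ₂| (4 * |sin θ₁|) with hs | hs
  · nlinarith [abs_nonneg V₂]
  -- `θ₁` is close to a multiple of `π`, so `sin (θ₁ + θ₂)` is comparable to `sin θ₂`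
  have hs₁ : |sin θ₁| < 1 / 4 := by linarith [abs_sin_le_one θ₂]
  have hc₁ : 24 / 25 ≤ |cos θ₁| := by
    nlinarith [abs_nonneg (cos θ₁), sq_abs (cos θ₁), sq_abs (sin θ₁), abs_nonneg (sin θ₁),
      sin_sq_add_cos_sq θ₁]
  have hlow : 7 / 10 * |sin θ₂| ≤ |sin (θ₁ + θ₂)| := by
    have := abs_sub_abs_le_abs_add (cos θ₁ * sin θ₂) (sin θ₁ * cos θ₂)
    rw [abs_mul, abs_mul] at this
    rw [sin_add, add_comm]
    nlinarith [abs_nonneg (sin θ₂), abs_nonneg (sin θ₁), abs_cos_le_one θ₂, abs_nonneg (cos θ₂)]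
  have hdiff : |V₂ - V₁| * |sin θ₂| ≤ 6 * M := by
    nlinarith [abs_nonneg (V₂ - V₁), abs_nonneg (sin θ₂)]
  calc |V₂| * |sin θ₂| ≤ (|V₁| + |V₂ - V₁|) * |sin θ₂| := by
        gcongr
        simpa using abs_add_le V₁ (V₂ - V₁)
    _ ≤ 8 * M := by linarith

lemma abs_add_abs_le_abs_add_add_abs_sub (p q : ℝ) : |p| + |q| ≤ |p + q| + |p - q| := by
  have h₁ : |2 * p| ≤ |p + q| + |p - q| := by
    simpa [← two_mul] using abs_add_le (p + q) (p - q)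
  have h₂ : |2 * q| ≤ |p + q| + |p - q| := by
    simpa [← two_mul] using abs_sub (p + q) (p - q)
  rw [abs_mul, abs_two] at h₁ h₂
  linarith

lemma enorm2_le_abs_add_abs (a : ℝ × ℝ) : enorm2 a ≤ |a.1| + |a.2| := by
  rw [enorm2, sqrt_le_left (by positivity)]
  nlinarith [sq_abs a.1, sq_abs a.2, abs_nonneg a.1, abs_nonneg a.2]

lemma abs_left_le_enorm2 (p q : ℝ) : |p| ≤ enorm2 (p, q) :=
  abs_le_sqrt (le_add_of_nonneg_right (sq_nonneg q))

lemma abs_right_le_enorm2 (p q : ℝ) : |q| ≤ enorm2 (p, q) :=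
  abs_le_sqrt (le_add_of_nonneg_left (sq_nonneg p))

lemma abs_sin_half_sub_two_pi_mul_int (w : ℝ) (m : ℤ) :
    |sin ((w - 2 * π * m) / 2)| = |sin (w / 2)| := by
  rw [show (w - 2 * π * m) / 2 = w / 2 - m * π by ring, sin_sub_int_mul_pi, abs_mul,
    abs_neg_one_zpow, one_mul]

lemma two_mul_abs_sin_half_le (w : ℝ) (m : ℤ) : 2 * |sin (w / 2)| ≤ |w - 2 * π * m| := by
  have := abs_sin_le_abs (x := (w - 2 * π * m) / 2)
  rw [abs_sin_half_sub_two_pi_mul_int, abs_div, abs_two] at this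
  linarith

lemma abs_le_pi_mul_abs_sin_half {w : ℝ} (hw : |w| ≤ π) : |w| ≤ π * |sin (w / 2)| := by
  have hsin : |sin (w / 2)| = |sin (|w| / 2)| := by
    rcases abs_choice w with h | h <;> rw [h]
    rw [neg_div, sin_neg, abs_neg]
  have jordan := mul_le_sin (x := |w| / 2) (by positivity) (by linarith)
  rw [hsin]
  calc |w| = π * (2 / π * (|w| / 2)) := by field_simp
    _ ≤ π * |sin (|w| / 2)| := by gcongr; exact jordan.trans (le_abs_self _)

lemma exists_int_abs_sub_two_pi_mul_le (w : ℝ) :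
    ∃ m : ℤ, |w - 2 * π * m| ≤ π * |sin (w / 2)| := by
  refine ⟨round (w / (2 * π)), ?_⟩
  rw [← abs_sin_half_sub_two_pi_mul_int w (round (w / (2 * π)))]
  refine abs_le_pi_mul_abs_sin_half ?_
  have hround := abs_sub_round (w / (2 * π))
  calc |w - 2 * π * round (w / (2 * π))| = 2 * π * |w / (2 * π) - round (w / (2 * π))| := by
        rw [← abs_of_pos two_pi_pos, ← abs_mul, abs_of_pos two_pi_pos]
        congr 1
        field_simp
    _ ≤ 2 * π * (1 / 2) := by gcongr
    _ = π := by ring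

lemma abs_sin_half_add_abs_sin_half_le_torusDist (x y : ℝ × ℝ) :
    |sin ((x.1 - y.1) / 2)| + |sin ((x.2 - y.2) / 2)| ≤ torusDist x y := by
  refine le_csInf ⟨_, 0, rfl⟩ ?_
  rintro t ⟨m, rfl⟩
  have h₁ := (two_mul_abs_sin_half_le (x.1 - y.1) m.1).trans
    (abs_left_le_enorm2 _ (x.2 - y.2 - 2 * π * m.2))
  have h₂ := (two_mul_abs_sin_half_le (x.2 - y.2) m.2).trans
    (abs_right_le_enorm2 (x.1 - y.1 - 2 * π * m.1) _)
  linarith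

lemma torusDist_le_pi_mul (x y : ℝ × ℝ) :
    torusDist x y ≤ π * (|sin ((x.1 - y.1) / 2)| + |sin ((x.2 - y.2) / 2)|) := by
  obtain ⟨m₁, h₁⟩ := exists_int_abs_sub_two_pi_mul_le (x.1 - y.1)
  obtain ⟨m₂, h₂⟩ := exists_int_abs_sub_two_pi_mul_le (x.2 - y.2)
  have hbdd : BddBelow {t | ∃ m : ℤ × ℤ,
      t = enorm2 (x.1 - y.1 - 2 * π * (m.1 : ℝ), x.2 - y.2 - 2 * π * (m.2 : ℝ))} :=
    ⟨0, by rintro t ⟨m, rfl⟩; exact sqrt_nonneg _⟩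
  calc torusDist x y ≤ enorm2 (x.1 - y.1 - 2 * π * m₁, x.2 - y.2 - 2 * π * m₂) :=
        csInf_le hbdd ⟨(m₁, m₂), rfl⟩
    _ ≤ _ := (enorm2_le_abs_add_abs _).trans (by linarith)

lemma abs_sin_half_add_abs_sin_half_pos {x y : ℝ × ℝ}
    (hxy : ∀ m : ℤ × ℤ, (x.1 - y.1, x.2 - y.2) ≠ (2 * π * (m.1 : ℝ), 2 * π * (m.2 : ℝ))) :
    0 < |sin ((x.1 - y.1) / 2)| + |sin ((x.2 - y.2) / 2)| := by
  by_contra! h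
  have h₁ : |sin ((x.1 - y.1) / 2)| = 0 := by
    linarith [abs_nonneg (sin ((x.1 - y.1) / 2)), abs_nonneg (sin ((x.2 - y.2) / 2))]
  have h₂ : |sin ((x.2 - y.2) / 2)| = 0 := by
    linarith [abs_nonneg (sin ((x.1 - y.1) / 2)), abs_nonneg (sin ((x.2 - y.2) / 2))]
  obtain ⟨m₁, hm₁⟩ := sin_eq_zero_iff.mp (abs_eq_zero.mp h₁)
  obtain ⟨m₂, hm₂⟩ := sin_eq_zero_iff.mp (abs_eq_zero.mp h₂)
  exact hxy (m₁, m₂) (Prod.ext (by simp only; linarith) (by simp only; linarith))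

lemma finite_setOf_cast_sq_add_cast_sq_le (R : ℝ) :
    {k : ℤ × ℤ | (k.1 : ℝ) ^ 2 + (k.2 : ℝ) ^ 2 ≤ R ^ 2}.Finite := by
  refine (Set.finite_Icc (-⌈|R|⌉, -⌈|R|⌉) (⌈|R|⌉, ⌈|R|⌉)).subset ?_
  rintro ⟨k₁, k₂⟩ hk
  replace hk : (k₁ : ℝ) ^ 2 + (k₂ : ℝ) ^ 2 ≤ R ^ 2 := hk
  have h₁ : |(k₁ : ℝ)| ≤ ⌈|R|⌉ :=
    (abs_le_of_sq_le_sq (by rw [sq_abs]; nlinarith) (abs_nonneg R)).trans (Int.le_ceil _)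
  have h₂ : |(k₂ : ℝ)| ≤ ⌈|R|⌉ :=
    (abs_le_of_sq_le_sq (by rw [sq_abs]; nlinarith) (abs_nonneg R)).trans (Int.le_ceil _)
  rw [abs_le] at h₁ h₂
  simp only [Set.mem_Icc, Prod.mk_le_mk]
  exact_mod_cast And.intro (And.intro h₁.1 h₂.1) (And.intro h₁.2 h₂.2)

lemma le_sSup_of_mem_lattice_ball (f : ℤ × ℤ → ℝ) {R : ℝ} {k : ℤ × ℤ} (hk : k ≠ 0)
    (hkR : (k.1 : ℝ) ^ 2 + (k.2 : ℝ) ^ 2 ≤ R ^ 2) :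
    f k ≤ sSup {t | ∃ k : ℤ × ℤ, k ≠ 0 ∧ (k.1 : ℝ) ^ 2 + (k.2 : ℝ) ^ 2 ≤ R ^ 2 ∧ t = f k} := by
  refine le_csSup (Set.Finite.bddAbove ?_) ⟨k, hk, hkR, rfl⟩
  refine ((finite_setOf_cast_sq_add_cast_sq_le R).image f).subset ?_
  rintro t ⟨k, -, hkR, rfl⟩
  exact ⟨k, hkR, rfl⟩

lemma two_point_bound {x y a b : ℝ × ℝ} {M : ℝ}
    (hM : ∀ k : ℤ × ℤ, k ≠ 0 → (k.1 : ℝ) ^ 2 + (k.2 : ℝ) ^ 2 ≤ 2 ^ 2 →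
      |dotR (uFun k x) a + dotR (uFun k y) b| ≤ M) :
    (enorm2 a + enorm2 b) * (|sin ((x.1 - y.1) / 2)| + |sin ((x.2 - y.2) / 2)|) ≤ 52 * M := by
  have pair := fun k (hk : k ≠ 0) (hR : (k.1 : ℝ) ^ 2 + (k.2 : ℝ) ^ 2 ≤ 2 ^ 2) =>
    mode_pair_half_angle_bound hk (hM k hk hR) (hM (-k) (neg_ne_zero.mpr hk) (by simpa using hR))
  obtain ⟨hU₂, hV₂⟩ := pair (1, 0) (by decide) (by norm_num)
  obtain ⟨hU₁, hV₁⟩ := pair (0, -1) (by decide) (by norm_num)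
  obtain ⟨hU₂', -⟩ := pair (2, 0) (by decide) (by norm_num)
  obtain ⟨hU₁', -⟩ := pair (0, -2) (by decide) (by norm_num)
  obtain ⟨-, hV⟩ := pair (1, 1) (by decide) (by norm_num)
  norm_num at hU₁ hU₂ hV₁ hV₂ hU₁' hU₂' hV
  have hM₀ : 0 ≤ M := (abs_nonneg _).trans (hM (1, 0) (by decide) (by norm_num))
  have U₁ : |a.1 + b.1| ≤ 8 * M := abs_le_of_abs_mul_abs_cos_le hU₁ (by linarith)
  have U₂ : |a.2 + b.2| ≤ 8 * M := abs_le_of_abs_mul_abs_cos_le hU₂ (by linarith)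
  have V₁ : |a.1 - b.1| * |sin ((x.1 - y.1) / 2)| ≤ 8 * M :=
    abs_mul_abs_sin_le_of_abs_sin_add hV₁ hV₂ (by rw [abs_sub_comm, add_comm]; linarith)
  have V₂ : |a.2 - b.2| * |sin ((x.2 - y.2) / 2)| ≤ 8 * M :=
    abs_mul_abs_sin_le_of_abs_sin_add hV₂ hV₁ (by linarith)
  have hs₁ := abs_sin_le_one ((x.1 - y.1) / 2)
  have hs₂ := abs_sin_le_one ((x.2 - y.2) / 2)
  have ha := enorm2_le_abs_add_abs a
  have hb := enorm2_le_abs_add_abs b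
  have h₁ := abs_add_abs_le_abs_add_add_abs_sub a.1 b.1
  have h₂ := abs_add_abs_le_abs_add_add_abs_sub a.2 b.2
  set s₁ := |sin ((x.1 - y.1) / 2)|
  set s₂ := |sin ((x.2 - y.2) / 2)|
  have hs : 0 ≤ s₁ + s₂ := add_nonneg (abs_nonneg _) (abs_nonneg _)
  have hU : (|a.1 + b.1| + |a.2 + b.2|) * (s₁ + s₂) ≤ 16 * M * 2 :=
    mul_le_mul (by linarith) (by linarith) hs (by linarith)
  calc (enorm2 a + enorm2 b) * (s₁ + s₂)
      ≤ (|a.1 + b.1| + |a.2 + b.2| + |a.1 - b.1| + |a.2 - b.2|) * (s₁ + s₂) :=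
        mul_le_mul_of_nonneg_right (by linarith) hs
    _ = (|a.1 + b.1| + |a.2 + b.2|) * (s₁ + s₂) + |a.1 - b.1| * s₁ + |a.1 - b.1| * s₂
          + |a.2 - b.2| * s₁ + |a.2 - b.2| * s₂ := by ring
    _ ≤ 52 * M := by linarith

/-- **Nondegeneracy of the forcing directions for the two-point process.**
There are `C, R > 0` such that for all `x', y' ∈ ℝ²` distinct on the torus and all
`a, b ∈ ℝ²`, `|a| + |b| ≤ C d(x',y')⁻¹ max_{0 < |k| ≤ R} |u_k(x')·a + u_k(y')·b|`. -/
theorem two_point_nondegeneracy :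
    ∃ C > (0 : ℝ), ∃ R > (0 : ℝ), ∀ x' y' : ℝ × ℝ,
      (∀ m : ℤ × ℤ,
        (x'.1 - y'.1, x'.2 - y'.2) ≠ (2 * π * (m.1 : ℝ), 2 * π * (m.2 : ℝ))) →
      ∀ a b : ℝ × ℝ,
        enorm2 a + enorm2 b ≤ C * (torusDist x' y')⁻¹ *
          sSup {t | ∃ k : ℤ × ℤ, k ≠ 0 ∧ (k.1 : ℝ) ^ 2 + (k.2 : ℝ) ^ 2 ≤ R ^ 2 ∧
            t = |dotR (uFun k x') a + dotR (uFun k y') b|} := by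
  refine ⟨52 * π, by positivity, 2, two_pos, fun x' y' hxy a b => ?_⟩
  set M := sSup {t | ∃ k : ℤ × ℤ, k ≠ 0 ∧ (k.1 : ℝ) ^ 2 + (k.2 : ℝ) ^ 2 ≤ 2 ^ 2 ∧
    t = |dotR (uFun k x') a + dotR (uFun k y') b|}
  have hbound := two_point_bound (x := x') (y := y') (a := a) (b := b) (M := M)
    fun k hk hkR =>
      le_sSup_of_mem_lattice_ball (fun k => |dotR (uFun k x') a + dotR (uFun k y') b|) hk hkR
  set s := |sin ((x'.1 - y'.1) / 2)| + |sin ((x'.2 - y'.2) / 2)|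
  have hd : 0 < torusDist x' y' := (abs_sin_half_add_abs_sin_half_pos hxy).trans_le
    (abs_sin_half_add_abs_sin_half_le_torusDist x' y')
  have hnorm : 0 ≤ enorm2 a + enorm2 b := add_nonneg (sqrt_nonneg _) (sqrt_nonneg _)
  calc enorm2 a + enorm2 b = (enorm2 a + enorm2 b) * torusDist x' y' * (torusDist x' y')⁻¹ := by
        field_simp
    _ ≤ (enorm2 a + enorm2 b) * (π * s) * (torusDist x' y')⁻¹ := by
        gcongr
        exact torusDist_le_pi_mul x' y'
    _ ≤ π * (52 * M) * (torusDist x' y')⁻¹ := by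
        rw [mul_left_comm]
        gcongr
    _ = 52 * π * (torusDist x' y')⁻¹ * M := by ring
end

section
/- There exists a constant C > 0 such that for all x' ∈ ℝ², all τ' ∈ ℝ² ∖ {0}, and all y, p ∈ ℝ²: √(|y|² + |p|²) ≤ C · (1 + |τ'|^{−1}) · max_{k ∈ ℤ²∖{(0,0)}, |k| ≤ 2} | u_k(x')·y + ((τ'·∇)u_k(x'))·p |, where (τ'·∇)u_k(x') ∈ ℝ² denotes the directional derivative of the vector field u_k at x' in the direction τ'. -/
open Real

/-! Since `e_{-k}(x) = cos (k·x)` is the quarter-period shift of `e_k(x) = sin (k·x)`, the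
responses of the modes `k` and `-k` are the coordinates of `|k|⁻² (k × y, (k·τ')(k × p))`
rotated by the angle `k·x'`, so the sum of their squares does not depend on `x'`. The four
directions `(1,0), (0,1), (1,1), (1,-1)` then control `|y|²` and `|τ'|²|p|²`. -/

namespace TangentNondegeneracy

noncomputable def phase (k : ℤ × ℤ) : (ℝ × ℝ) →L[ℝ] ℝ :=
  (k.1 : ℝ) • ContinuousLinearMap.fst ℝ ℝ ℝ + (k.2 : ℝ) • ContinuousLinearMap.snd ℝ ℝ ℝ

def cross (k : ℤ × ℤ) (v : ℝ × ℝ) : ℝ := k.1 * v.2 - k.2 * v.1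

def normSq (k : ℤ × ℤ) : ℝ := (k.1 : ℝ) ^ 2 + (k.2 : ℝ) ^ 2

def IsPos (k : ℤ × ℤ) : Prop := 0 < k.1 ∨ (k.1 = 0 ∧ 0 < k.2)

noncomputable def response (k : ℤ × ℤ) (x τ y p : ℝ × ℝ) : ℝ :=
  dotR (uFun k x) y + dotR (fderiv ℝ (uFun k) x τ) p

@[simp]
lemma phase_apply (k : ℤ × ℤ) (x : ℝ × ℝ) : phase k x = k.1 * x.1 + k.2 * x.2 := by
  simp [phase]

@[simp]
lemma phase_neg (k : ℤ × ℤ) (x : ℝ × ℝ) : phase (-k) x = -phase k x := by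
  simp only [phase_apply, Prod.fst_neg, Prod.snd_neg, Int.cast_neg]; ring

@[simp]
lemma cross_neg (k : ℤ × ℤ) (v : ℝ × ℝ) : cross (-k) v = -cross k v := by
  simp only [cross, Prod.fst_neg, Prod.snd_neg, Int.cast_neg]; ring

@[simp]
lemma normSq_neg (k : ℤ × ℤ) : normSq (-k) = normSq k := by
  simp [normSq]

lemma IsPos.ne_zero {k : ℤ × ℤ} (hk : IsPos k) : k ≠ 0 := by
  rintro rfl
  simp [IsPos] at hk

lemma IsPos.not_neg {k : ℤ × ℤ} (hk : IsPos k) : ¬IsPos (-k) := by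
  unfold IsPos at *
  simp only [Prod.fst_neg, Prod.snd_neg]
  omega

lemma IsPos.normSq_pos {k : ℤ × ℤ} (hk : IsPos k) : 0 < normSq k := by
  have : (k.1 : ℝ) ≠ 0 ∨ (k.2 : ℝ) ≠ 0 := by
    rcases hk with h | ⟨-, h⟩
    · exact .inl (by exact_mod_cast h.ne')
    · exact .inr (by exact_mod_cast h.ne')
  unfold normSq
  rcases this with h | h <;> positivity

lemma eFun_of_isPos {k : ℤ × ℤ} (hk : IsPos k) : eFun k = fun x ↦ sin (phase k x) := by
  funext x
  rw [eFun, phase_apply]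
  exact if_pos hk

lemma eFun_of_not_isPos {k : ℤ × ℤ} (hk : ¬IsPos k) : eFun k = fun x ↦ cos (phase k x) := by
  funext x
  rw [eFun, phase_apply]
  exact if_neg hk

lemma hasFDerivAt_comp_phase {f f' : ℝ → ℝ} (hf : ∀ t, HasDerivAt f (f' t) t)
    (k : ℤ × ℤ) (x : ℝ × ℝ) :
    HasFDerivAt (fun x ↦ f (phase k x)) (f' (phase k x) • phase k) x :=
  (hf _).comp_hasFDerivAt x (phase k).hasFDerivAt

lemma uFun_eq_of_eFun_eq {f f' : ℝ → ℝ} (hf : ∀ t, HasDerivAt f (f' t) t) {k : ℤ × ℤ}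
    (he : eFun k = fun x ↦ f (phase k x)) :
    uFun k = fun x ↦ (normSq k)⁻¹ • ((k.2 : ℝ) * f' (phase k x), -((k.1 : ℝ) * f' (phase k x))) := by
  funext x
  simp only [uFun, he, (hasFDerivAt_comp_phase hf k x).fderiv]
  ext <;> simp [normSq, mul_comm]

lemma hasFDerivAt_uFun_of_eFun_eq {f f' f'' : ℝ → ℝ} (hf : ∀ t, HasDerivAt f (f' t) t)
    (hf' : ∀ t, HasDerivAt f' (f'' t) t) {k : ℤ × ℤ} (he : eFun k = fun x ↦ f (phase k x))
    (x : ℝ × ℝ) :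
    HasFDerivAt (uFun k) ((normSq k)⁻¹ • ((k.2 : ℝ) • f'' (phase k x) • phase k).prod
      (-((k.1 : ℝ) • f'' (phase k x) • phase k))) x := by
  rw [uFun_eq_of_eFun_eq hf he]
  exact ((hasFDerivAt_comp_phase hf' k x).const_mul (k.2 : ℝ)).prodMk
    ((hasFDerivAt_comp_phase hf' k x).const_mul (k.1 : ℝ)).neg |>.const_smul (normSq k)⁻¹

lemma response_eq_of_eFun_eq {f f' f'' : ℝ → ℝ} (hf : ∀ t, HasDerivAt f (f' t) t)
    (hf' : ∀ t, HasDerivAt f' (f'' t) t) {k : ℤ × ℤ} (he : eFun k = fun x ↦ f (phase k x))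
    (x τ y p : ℝ × ℝ) :
    response k x τ y p =
      -(normSq k)⁻¹ * (f' (phase k x) * cross k y + f'' (phase k x) * (phase k τ * cross k p)) := by
  rw [response, (hasFDerivAt_uFun_of_eFun_eq hf hf' he x).fderiv, uFun_eq_of_eFun_eq hf he]
  simp only [dotR, cross, phase_apply, Prod.smul_mk, smul_eq_mul, mul_neg, neg_mul,
    smul_apply, ContinuousLinearMap.prod_apply, neg_apply]
  ring

lemma sq_response_add_sq_response_neg {k : ℤ × ℤ} (hk : IsPos k) (x τ y p : ℝ × ℝ) :
    normSq k ^ 2 * (response k x τ y p ^ 2 + response (-k) x τ y p ^ 2) =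
      cross k y ^ 2 + (phase k τ * cross k p) ^ 2 := by
  rw [response_eq_of_eFun_eq hasDerivAt_sin hasDerivAt_cos (eFun_of_isPos hk),
    response_eq_of_eFun_eq hasDerivAt_cos (fun t ↦ (hasDerivAt_sin t).neg)
      (eFun_of_not_isPos hk.not_neg)]
  simp only [phase_neg, cross_neg, normSq_neg, sin_neg, cos_neg]
  field_simp [hk.normSq_pos.ne']
  linear_combination (cross k y ^ 2 + (phase k τ * cross k p) ^ 2) * sin_sq_add_cos_sq (phase k x)

lemma sq_cross_add_sq_le {k : ℤ × ℤ} (hk : IsPos k) {x τ y p : ℝ × ℝ} {M : ℝ}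
    (h : |response k x τ y p| ≤ M) (h_neg : |response (-k) x τ y p| ≤ M) :
    cross k y ^ 2 + (phase k τ * cross k p) ^ 2 ≤ 2 * normSq k ^ 2 * M ^ 2 := by
  have h2 := sq_le_sq' (abs_le.1 h).1 (abs_le.1 h).2
  have h2_neg := sq_le_sq' (abs_le.1 h_neg).1 (abs_le.1 h_neg).2
  rw [← sq_response_add_sq_response_neg hk]
  nlinarith [sq_nonneg (normSq k)]

lemma finite_setOf_normSq_le (R : ℝ) : {k : ℤ × ℤ | normSq k ≤ R}.Finite := by
  have hbound : ∀ n : ℤ, (n : ℝ) ^ 2 ≤ R → -⌈R⌉ ≤ n ∧ n ≤ ⌈R⌉ := by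
    intro n hn
    have hle : (n : ℝ) ≤ n ^ 2 := by exact_mod_cast Int.le_self_sq n
    have hle_neg : (-n : ℝ) ≤ n ^ 2 := by exact_mod_cast (Int.le_self_sq (-n)).trans_eq (neg_sq n)
    have hceil := Int.le_ceil R
    constructor
    · rw [neg_le]; exact_mod_cast (by linarith : (-n : ℝ) ≤ ⌈R⌉)
    · exact_mod_cast (by linarith : (n : ℝ) ≤ ⌈R⌉)
  refine (Set.finite_Icc (-⌈R⌉, -⌈R⌉) (⌈R⌉, ⌈R⌉)).subset fun k (hk : normSq k ≤ R) ↦ ?_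
  obtain ⟨h1, h1'⟩ := hbound k.1 (by unfold normSq at hk; nlinarith [sq_nonneg (k.2 : ℝ)])
  obtain ⟨h2, h2'⟩ := hbound k.2 (by unfold normSq at hk; nlinarith [sq_nonneg (k.1 : ℝ)])
  exact ⟨⟨h1, h2⟩, ⟨h1', h2'⟩⟩

lemma bddAbove_setOf_normSq_le (g : ℤ × ℤ → ℝ) (R : ℝ) :
    BddAbove {t | ∃ k : ℤ × ℤ, k ≠ 0 ∧ normSq k ≤ R ∧ t = g k} :=
  ((finite_setOf_normSq_le R).image g).bddAbove.mono <| by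
    rintro t ⟨k, -, hk, rfl⟩
    exact ⟨k, hk, rfl⟩

lemma four_directions {y τ p : ℝ × ℝ} {M : ℝ}
    (h : ∀ k, IsPos k → normSq k ≤ 2 →
      cross k y ^ 2 + (phase k τ * cross k p) ^ 2 ≤ 2 * normSq k ^ 2 * M ^ 2) :
    y.1 ^ 2 + y.2 ^ 2 ≤ 4 * M ^ 2 ∧ (τ.1 ^ 2 + τ.2 ^ 2) * (p.1 ^ 2 + p.2 ^ 2) ≤ 16 * M ^ 2 := by
  have h10 := h (1, 0) (.inl one_pos) (by norm_num [normSq])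
  have h01 := h (0, 1) (.inr ⟨rfl, one_pos⟩) (by norm_num [normSq])
  have h11 := h (1, 1) (.inl one_pos) (by norm_num [normSq])
  have h1m := h (1, -1) (.inl one_pos) (by norm_num [normSq])
  simp only [cross, normSq, phase_apply] at h10 h01 h11 h1m
  norm_num at h10 h01 h11 h1m
  constructor
  · nlinarith
  -- `(τ₁+τ₂)²(p₂-p₁)² + (τ₁-τ₂)²(p₂+p₁)² = 2|τ|²|p|² - 8 (τ₁p₂)(τ₂p₁)`, and the cross term
  -- is controlled by the directions `(1,0)` and `(0,1)`.
  · nlinarith [sq_nonneg (τ.1 * p.2 - τ.2 * p.1)]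

lemma sqrt_add_le_of_le {r M Y P : ℝ} (hr : 0 < r) (hM : 0 ≤ M) (hY : Y ≤ 4 * M ^ 2)
    (hP : r ^ 2 * P ≤ 16 * M ^ 2) : √(Y + P) ≤ 4 * (1 + r⁻¹) * M := by
  have hP' : P ≤ (4 * M * r⁻¹) ^ 2 := by
    rw [mul_pow, inv_pow, ← div_eq_mul_inv, le_div_iff₀ (by positivity)]
    linarith
  rw [sqrt_le_left (by positivity)]
  nlinarith [mul_nonneg (sq_nonneg M) (inv_pos.2 hr).le]

lemma enorm2_pos {a : ℝ × ℝ} (ha : a ≠ 0) : 0 < enorm2 a := by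
  have : a.1 ≠ 0 ∨ a.2 ≠ 0 := by
    contrapose! ha
    exact Prod.ext ha.1 ha.2
  unfold enorm2
  rcases this with h | h <;> positivity

end TangentNondegeneracy

open TangentNondegeneracy

/-- **Nondegeneracy of the forcing directions for the tangent process.**
There is `C > 0` such that for all `x' ∈ ℝ²`, `τ' ∈ ℝ² ∖ {0}`, and `y, p ∈ ℝ²`,
`√(|y|² + |p|²) ≤ C (1 + |τ'|⁻¹) max_{0 < |k| ≤ 2} |u_k(x')·y + ((τ'·∇)u_k(x'))·p|`. -/
theorem tangent_nondegeneracy :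
    ∃ C > (0 : ℝ), ∀ x' : ℝ × ℝ, ∀ τ' : ℝ × ℝ, τ' ≠ 0 → ∀ y p : ℝ × ℝ,
      Real.sqrt (y.1 ^ 2 + y.2 ^ 2 + p.1 ^ 2 + p.2 ^ 2) ≤
        C * (1 + (enorm2 τ')⁻¹) *
          sSup {t | ∃ k : ℤ × ℤ, k ≠ 0 ∧ (k.1 : ℝ) ^ 2 + (k.2 : ℝ) ^ 2 ≤ 4 ∧
            t = |dotR (uFun k x') y + dotR (fderiv ℝ (uFun k) x' τ') p|} := by
  refine ⟨4, by norm_num, fun x τ hτ y p ↦ ?_⟩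
  have hM : ∀ k : ℤ × ℤ, k ≠ 0 → normSq k ≤ 4 → |response k x τ y p| ≤
      sSup {t | ∃ k : ℤ × ℤ, k ≠ 0 ∧ normSq k ≤ 4 ∧ t = |response k x τ y p|} :=
    fun k hk hk4 ↦ le_csSup (bddAbove_setOf_normSq_le _ 4) ⟨k, hk, hk4, rfl⟩
  obtain ⟨hy, hp⟩ := four_directions fun k hk hk2 ↦ sq_cross_add_sq_le hk
    (hM k hk.ne_zero (by linarith))
    (hM (-k) (neg_ne_zero.2 hk.ne_zero) (by rw [normSq_neg]; linarith))
  have hr := enorm2_pos hτ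
  rw [add_assoc]
  refine sqrt_add_le_of_le hr ((abs_nonneg _).trans (hM (1, 0) (by simp) (by norm_num [normSq])))
    hy ?_
  rwa [enorm2, sq_sqrt (by positivity)]
end

section
/- Suppose there exist constants C > 0 and R ≥ 1 such that for every x' ∈ ℝ² and every pair (y, B) with y ∈ ℝ² and B a 2×2 real matrix with Tr(B) = 0: √(|y|² + |B|²) ≤ C · max_{k ∈ ℤ²∖{(0,0)}, |k| ≤ R} | u_k(x')·y + ⟨∇u_k(x'), B⟩ |. Then for every x' ∈ ℝ², every A' ∈ SL(2,ℝ), and every pair (y, B) with y ∈ ℝ² and B a 2×2 real matrix with Tr(A'^{−1}B) = 0: √(|y|² + |B|²) ≤ C · |A'| · max_{k ∈ ℤ²∖{(0,0)}, |k| ≤ R} | u_k(x')·y + ⟨A'·∇u_k(x'), B⟩ |. -/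
/-!
Each `∇u_k` is traceless, since `u_k` is a perpendicular gradient and hence divergence-free.
So `⟨A'∇u_k, B⟩ = ⟨∇u_k, A'ᵀB⟩ = ⟨∇u_k, B'⟩`, where `B'` is the traceless part of `A'ᵀB`, and
the hypothesis applied to `(y, B')` bounds the right-hand side from below by
`|A'| √(|y|² + |B'|²)`. For the left-hand side, write `B = A'⁻ᵀB' + μ A'⁻ᵀ`; the condition
`Tr(A'⁻¹B) = 0` says `B ⊥ A'⁻ᵀ`, so `|B| ≤ |A'⁻ᵀB'| ≤ |A'⁻ᵀ| |B'| = |A'| |B'|`, because for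
`det A' = 1` the inverse is the adjugate, which has the same entries as `A'` up to sign.
Finally `|A'|² ≥ 2 det A' = 2` takes care of `y`.
-/

open Real

/-- The gradient matrix `∇u_k(x)` with entries `(∇u_k(x))_{ij} = ∂_i (u_k)_j (x)`. -/
noncomputable def gradU (k : ℤ × ℤ) (x : ℝ × ℝ) : Matrix (Fin 2) (Fin 2) ℝ :=
  Matrix.of fun i j =>
    if j = 0 then (fderiv ℝ (uFun k) x (if i = 0 then ((1 : ℝ), (0 : ℝ)) else (0, 1))).1
    else (fderiv ℝ (uFun k) x (if i = 0 then ((1 : ℝ), (0 : ℝ)) else (0, 1))).2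

/-- The Frobenius inner product `⟨M, N⟩ = Tr(MᵀN)` on `2 × 2` real matrices. -/
def frob (M N : Matrix (Fin 2) (Fin 2) ℝ) : ℝ := ∑ i, ∑ j, M i j * N i j

/-- The Frobenius norm of a `2 × 2` real matrix. -/
noncomputable def frobNorm (M : Matrix (Fin 2) (Fin 2) ℝ) : ℝ := Real.sqrt (frob M M)

open scoped Matrix

noncomputable def perpGrad (f : ℝ × ℝ → ℝ) (x : ℝ × ℝ) : ℝ × ℝ :=
  (-(fderiv ℝ f x (0, 1)), fderiv ℝ f x (1, 0))

noncomputable def planarDiv (g : ℝ × ℝ → ℝ × ℝ) (x : ℝ × ℝ) : ℝ :=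
  (fderiv ℝ g x (1, 0)).1 + (fderiv ℝ g x (0, 1)).2

lemma planarDiv_const_smul (c : ℝ) (g : ℝ × ℝ → ℝ × ℝ) (x : ℝ × ℝ) :
    planarDiv (c • g) x = c * planarDiv g x := by
  simp [planarDiv, fderiv_const_smul_field, mul_add]

lemma planarDiv_perpGrad {f : ℝ × ℝ → ℝ} {x : ℝ × ℝ} (hf : ContDiffAt ℝ 2 f x) :
    planarDiv (perpGrad f) x = 0 := by
  have hdiff : DifferentiableAt ℝ (fderiv ℝ f) x :=
    (hf.fderiv_right le_rfl).differentiableAt one_ne_zero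
  have hsymm := hf.isSymmSndFDerivAt (by simp) (1, 0) (0, 1)
  have hderiv : HasFDerivAt (perpGrad f) _ x :=
    ((hdiff.hasFDerivAt.clm_apply (hasFDerivAt_const ((0 : ℝ), (1 : ℝ)) x)).neg).prodMk
      (hdiff.hasFDerivAt.clm_apply (hasFDerivAt_const ((1 : ℝ), (0 : ℝ)) x))
  rw [planarDiv, hderiv.fderiv]
  simp [hsymm]

lemma contDiff_eFun (k : ℤ × ℤ) : ContDiff ℝ 2 (eFun k) := by
  unfold eFun
  split_ifs <;> fun_prop

lemma uFun_eq_smul_perpGrad (k : ℤ × ℤ) :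
    uFun k = (-(((k.1 : ℝ) ^ 2 + (k.2 : ℝ) ^ 2)⁻¹)) • perpGrad (eFun k) := rfl

lemma trace_gradU (k : ℤ × ℤ) (x : ℝ × ℝ) : (gradU k x).trace = 0 := by
  have hdiv : (gradU k x).trace = planarDiv (uFun k) x := by
    simp [Matrix.trace_fin_two, gradU, planarDiv]
  rw [hdiv, uFun_eq_smul_perpGrad, planarDiv_const_smul,
    planarDiv_perpGrad (contDiff_eFun k).contDiffAt, mul_zero]

noncomputable def traceless {n : Type*} [Fintype n] [DecidableEq n] (M : Matrix n n ℝ) :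
    Matrix n n ℝ :=
  M - (M.trace / Fintype.card n) • 1

lemma trace_traceless {n : Type*} [Fintype n] [DecidableEq n] [Nonempty n] (M : Matrix n n ℝ) :
    (traceless M).trace = 0 := by
  simp [traceless, Matrix.trace_sub, Matrix.trace_smul, Matrix.trace_one]

lemma frob_eq_trace (M N : Matrix (Fin 2) (Fin 2) ℝ) : frob M N = (Mᵀ * N).trace := by
  simp only [frob, Matrix.trace, Matrix.diag, Matrix.mul_apply, Matrix.transpose_apply]
  exact Finset.sum_comm

lemma frob_mul_left (A G B : Matrix (Fin 2) (Fin 2) ℝ) : frob (A * G) B = frob G (Aᵀ * B) := by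
  rw [frob_eq_trace, frob_eq_trace, Matrix.transpose_mul, Matrix.mul_assoc]

lemma frob_mul_left_of_trace_eq_zero (A B : Matrix (Fin 2) (Fin 2) ℝ)
    {G : Matrix (Fin 2) (Fin 2) ℝ} (hG : G.trace = 0) : frob (A * G) B = frob G (traceless (Aᵀ * B)) := by
  rw [frob_mul_left, frob_eq_trace, frob_eq_trace, traceless, Matrix.mul_sub, Matrix.mul_smul,
    Matrix.mul_one, Matrix.trace_sub, Matrix.trace_smul, Matrix.trace_transpose, hG, smul_zero,
    sub_zero]

lemma frob_self_nonneg (M : Matrix (Fin 2) (Fin 2) ℝ) : 0 ≤ frob M M :=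
  Finset.sum_nonneg fun i _ => Finset.sum_nonneg fun j _ => mul_self_nonneg (M i j)

lemma frob_self_le_of_frob_add_smul_eq_zero {P X : Matrix (Fin 2) (Fin 2) ℝ} {c : ℝ}
    (h : frob P (X + c • P) = 0) : frob (X + c • P) (X + c • P) ≤ frob X X := by
  have hexp : frob X X = frob (X + c • P) (X + c • P) - 2 * c * frob P (X + c • P) +
      c ^ 2 * frob P P := by
    simp only [frob, Fin.sum_univ_two, Matrix.add_apply, Matrix.smul_apply, smul_eq_mul]
    ring
  rw [hexp, h]
  linarith [mul_nonneg (sq_nonneg c) (frob_self_nonneg P)]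

section Frobenius

attribute [local instance] Matrix.frobeniusNormedAddCommGroup

lemma frob_self_eq_norm_sq (M : Matrix (Fin 2) (Fin 2) ℝ) : frob M M = ‖M‖ ^ 2 := by
  rw [Matrix.frobenius_norm_def, ← Real.rpow_natCast, ← Real.rpow_mul (by positivity)]
  norm_num [frob, sq]

lemma frob_mul_self_le (X Y : Matrix (Fin 2) (Fin 2) ℝ) :
    frob (X * Y) (X * Y) ≤ frob X X * frob Y Y := by
  rw [frob_self_eq_norm_sq, frob_self_eq_norm_sq, frob_self_eq_norm_sq, ← mul_pow]
  gcongr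
  exact Matrix.frobenius_norm_mul X Y

end Frobenius

lemma frob_transpose_self (M : Matrix (Fin 2) (Fin 2) ℝ) : frob Mᵀ Mᵀ = frob M M := by
  simp only [frob, Fin.sum_univ_two, Matrix.transpose_apply]
  ring

lemma frob_adjugate_self (M : Matrix (Fin 2) (Fin 2) ℝ) :
    frob M.adjugate M.adjugate = frob M M := by
  simp only [frob, Fin.sum_univ_two, Matrix.adjugate_fin_two, Matrix.of_apply, Matrix.cons_val',
    Matrix.cons_val_zero, Matrix.cons_val_one, Matrix.cons_val_fin_one]
  ring

lemma two_mul_det_le_frob_self (M : Matrix (Fin 2) (Fin 2) ℝ) : 2 * M.det ≤ frob M M := by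
  have : frob M M - 2 * M.det = (M 0 0 - M 1 1) ^ 2 + (M 0 1 + M 1 0) ^ 2 := by
    simp only [frob, Fin.sum_univ_two, Matrix.det_fin_two]
    ring
  nlinarith [sq_nonneg (M 0 0 - M 1 1), sq_nonneg (M 0 1 + M 1 0)]

lemma frob_self_le_mul_frob_traceless {A B : Matrix (Fin 2) (Fin 2) ℝ} (hdet : A.det = 1)
    (htr : (A⁻¹ * B).trace = 0) :
    frob B B ≤ frob A A * frob (traceless (Aᵀ * B)) (traceless (Aᵀ * B)) := by
  set T := traceless (Aᵀ * B) with hT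
  set P := A.adjugateᵀ
  have hPA : P * Aᵀ = 1 := by
    rw [← Matrix.transpose_mul, Matrix.mul_adjugate, hdet, one_smul, Matrix.transpose_one]
  have hB : B = P * T + ((Aᵀ * B).trace / Fintype.card (Fin 2)) • P := by
    rw [hT, traceless, Matrix.mul_sub, Matrix.mul_smul, Matrix.mul_one, sub_add_cancel,
      ← Matrix.mul_assoc, hPA, Matrix.one_mul]
  have horth : frob P B = 0 := by
    rwa [frob_eq_trace, Matrix.transpose_transpose, ← one_smul ℝ A.adjugate,
      ← Ring.inverse_one, ← hdet, ← Matrix.inv_def]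
  calc frob B B ≤ frob (P * T) (P * T) := by
        rw [hB] at horth ⊢
        exact frob_self_le_of_frob_add_smul_eq_zero horth
    _ ≤ frob P P * frob T T := frob_mul_self_le P T
    _ = frob A A * frob T T := by rw [frob_transpose_self, frob_adjugate_self]

theorem jacobian_nondegeneracy_of_nondegeneracy_at_identity_general
    (C R : ℝ)
    (hyp : ∀ x' : ℝ × ℝ, ∀ y : ℝ × ℝ, ∀ B : Matrix (Fin 2) (Fin 2) ℝ,
      Matrix.trace B = 0 →
      Real.sqrt (y.1 ^ 2 + y.2 ^ 2 + frob B B) ≤ C *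
        sSup {t | ∃ k : ℤ × ℤ, k ≠ 0 ∧ (k.1 : ℝ) ^ 2 + (k.2 : ℝ) ^ 2 ≤ R ^ 2 ∧
          t = |dotR (uFun k x') y + frob (gradU k x') B|}) :
    ∀ x' : ℝ × ℝ, ∀ A' : Matrix (Fin 2) (Fin 2) ℝ, A'.det = 1 →
      ∀ y : ℝ × ℝ, ∀ B : Matrix (Fin 2) (Fin 2) ℝ, Matrix.trace (A'⁻¹ * B) = 0 →
      Real.sqrt (y.1 ^ 2 + y.2 ^ 2 + frob B B) ≤ C * frobNorm A' *
        sSup {t | ∃ k : ℤ × ℤ, k ≠ 0 ∧ (k.1 : ℝ) ^ 2 + (k.2 : ℝ) ^ 2 ≤ R ^ 2 ∧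
          t = |dotR (uFun k x') y + frob (A' * gradU k x') B|} := by
  intro x' A' hdet y B htr
  have hsup := hyp x' y (traceless (A'ᵀ * B)) (trace_traceless _)
  simp_rw [← frob_mul_left_of_trace_eq_zero A' B (trace_gradU _ x')] at hsup
  have hB := frob_self_le_mul_frob_traceless hdet htr
  have hA : 1 ≤ frob A' A' := by linarith [two_mul_det_le_frob_self A']
  set B' := traceless (A'ᵀ * B)
  calc √(y.1 ^ 2 + y.2 ^ 2 + frob B B)
      ≤ √(frob A' A' * (y.1 ^ 2 + y.2 ^ 2 + frob B' B')) := by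
        gcongr
        nlinarith [add_nonneg (sq_nonneg y.1) (sq_nonneg y.2)]
    _ = frobNorm A' * √(y.1 ^ 2 + y.2 ^ 2 + frob B' B') := by
        rw [Real.sqrt_mul (by positivity), frobNorm]
    _ ≤ frobNorm A' * (C * _) := mul_le_mul_of_nonneg_left hsup (Real.sqrt_nonneg _)
    _ = _ := by ring

/-- **Nondegeneracy for the Jacobian process at a general base point from nondegeneracy at
the identity.** If `√(|y|² + |B|²) ≤ C max_{0<|k|≤R} |u_k(x')·y + ⟨∇u_k(x'), B⟩|` for all
traceless `B`, then for every `A' ∈ SL(2,ℝ)` and every `B` with `Tr(A'⁻¹ B) = 0`,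
`√(|y|² + |B|²) ≤ C |A'| max_{0<|k|≤R} |u_k(x')·y + ⟨A' ∇u_k(x'), B⟩|`. -/
theorem jacobian_nondegeneracy_of_nondegeneracy_at_identity
    (C R : ℝ) (hC : 0 < C) (hR : 1 ≤ R)
    (hyp : ∀ x' : ℝ × ℝ, ∀ y : ℝ × ℝ, ∀ B : Matrix (Fin 2) (Fin 2) ℝ,
      Matrix.trace B = 0 →
      Real.sqrt (y.1 ^ 2 + y.2 ^ 2 + frob B B) ≤ C *
        sSup {t | ∃ k : ℤ × ℤ, k ≠ 0 ∧ (k.1 : ℝ) ^ 2 + (k.2 : ℝ) ^ 2 ≤ R ^ 2 ∧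
          t = |dotR (uFun k x') y + frob (gradU k x') B|}) :
    ∀ x' : ℝ × ℝ, ∀ A' : Matrix (Fin 2) (Fin 2) ℝ, A'.det = 1 →
      ∀ y : ℝ × ℝ, ∀ B : Matrix (Fin 2) (Fin 2) ℝ, Matrix.trace (A'⁻¹ * B) = 0 →
      Real.sqrt (y.1 ^ 2 + y.2 ^ 2 + frob B B) ≤ C * frobNorm A' *
        sSup {t | ∃ k : ℤ × ℤ, k ≠ 0 ∧ (k.1 : ℝ) ^ 2 + (k.2 : ℝ) ^ 2 ≤ R ^ 2 ∧
          t = |dotR (uFun k x') y + frob (A' * gradU k x') B|} :=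
  jacobian_nondegeneracy_of_nondegeneracy_at_identity_general C R hyp
end

section
/- Let T > 0, α ∈ (0,1], and let f : [0,T] → ℝ be differentiable with α-Hölder continuous derivative f'. Then ‖f'‖_{C⁰} ≤ (8/T)·‖f‖_{C⁰} + 8·‖f‖_{C⁰}^{α/(1+α)} · ‖f'‖_{C^α}^{1/(1+α)}. -/
/-!
Fix `t ∈ [0,T]` and a step `0 < h ≤ T/2`; some `u ∈ [0,T]` lies at distance exactly `h` from `t`.
By the mean value theorem applied to `f - f'(t)·id` on the segment between `t` and `u`, the Hölder
bound on `f'` gives `|f(u) - f(t) - f'(t)(u - t)| ≤ [f']_α h^{1+α}`, hence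
`|f'(t)| ≤ 2‖f‖_{C⁰}/h + [f']_α h^α`. Choosing `h` to balance the two terms, capped at `T/2`,
yields the interpolation inequality.
-/

open Set Filter Topology

noncomputable def holderSeminorm (g : ℝ → ℝ) (s : Set ℝ) (α : ℝ) : ℝ :=
  sSup {q | ∃ x ∈ s, ∃ y ∈ s, x ≠ y ∧ q = |g x - g y| / |x - y| ^ α}

section HolderSeminorm

variable {g : ℝ → ℝ} {s : Set ℝ} {α : ℝ}

lemma holderSeminorm_nonneg : 0 ≤ holderSeminorm g s α :=
  Real.sSup_nonneg (by rintro _ ⟨x, -, y, -, -, rfl⟩; positivity)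

lemma abs_sub_le_holderSeminorm_mul {H : ℝ}
    (hH : ∀ x ∈ s, ∀ y ∈ s, |g x - g y| ≤ H * |x - y| ^ α) {x y : ℝ} (hx : x ∈ s) (hy : y ∈ s) :
    |g x - g y| ≤ holderSeminorm g s α * |x - y| ^ α := by
  rcases eq_or_ne x y with rfl | hxy
  · rw [sub_self, abs_zero]
    exact mul_nonneg holderSeminorm_nonneg (by positivity)
  have hpos : 0 < |x - y| ^ α := Real.rpow_pos_of_pos (abs_pos.2 (sub_ne_zero.2 hxy)) α
  rw [← div_le_iff₀ hpos]
  refine le_csSup ⟨H, ?_⟩ ⟨x, hx, y, hy, hxy, rfl⟩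
  rintro _ ⟨x, hx, y, hy, hxy, rfl⟩
  rw [div_le_iff₀ (Real.rpow_pos_of_pos (abs_pos.2 (sub_ne_zero.2 hxy)) α)]
  exact hH x hx y hy

end HolderSeminorm

lemma exists_mem_Icc_abs_sub_eq {a b t h : ℝ} (ht : t ∈ Icc a b) (h0 : 0 ≤ h)
    (hh : h ≤ (b - a) / 2) : ∃ u ∈ Icc a b, |u - t| = h := by
  rcases le_total t ((a + b) / 2) with hc | hc
  · exact ⟨t + h, ⟨by linarith [ht.1], by linarith⟩, by rw [add_sub_cancel_left, abs_of_nonneg h0]⟩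
  · exact ⟨t - h, ⟨by linarith, by linarith [ht.2]⟩, by
      rw [sub_sub_cancel_left, abs_neg, abs_of_nonneg h0]⟩

lemma le_of_forall_le_div_add_mul_rpow {a A B L α : ℝ} (hL : 0 < L) (hα : 0 < α)
    (hA : 0 ≤ A) (hB : 0 ≤ B) (hbound : ∀ h ∈ Ioc 0 L, a ≤ A / h + B * h ^ α) :
    a ≤ A / L + 2 * A ^ (α / (1 + α)) * B ^ (1 / (1 + α)) := by
  have he : α / (1 + α) ≠ 0 := by positivity
  have hc : 1 / (1 + α) ≠ 0 := by positivity
  rcases hA.eq_or_lt with rfl | hA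
  · have hlim : Tendsto (fun h : ℝ => B * h ^ α) (𝓝[>] 0) (𝓝 0) := by
      simpa [Real.zero_rpow hα.ne'] using
        ((Real.continuousAt_rpow_const 0 α (Or.inr hα.le)).tendsto.const_mul B).mono_left
          nhdsWithin_le_nhds
    have ha : a ≤ 0 := ge_of_tendsto hlim <| eventually_of_mem (Ioo_mem_nhdsGT hL)
      fun h hh => by simpa using hbound h (Ioo_subset_Ioc_self hh)
    rw [zero_div, Real.zero_rpow he, mul_zero, zero_mul, zero_add]
    exact ha
  rcases hB.eq_or_lt with rfl | hB
  · rw [Real.zero_rpow hc, mul_zero, add_zero]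
    simpa using hbound L ⟨hL, le_rfl⟩
  -- `h₀` balances the two terms: `A / h₀ = B h₀ ^ α`.
  set h₀ := (A / B) ^ (1 / (1 + α)) with hh₀
  have h₀_pos : 0 < h₀ := by positivity
  have h₀_pow : h₀ * h₀ ^ α = A / B := by
    rw [← Real.rpow_one_add' h₀_pos.le (by positivity), hh₀, ← Real.rpow_mul (by positivity),
      one_div_mul_cancel (by positivity), Real.rpow_one]
  have hbalance : A / h₀ = B * h₀ ^ α := by
    have hA_eq : A = B * (h₀ * h₀ ^ α) := by rw [h₀_pow]; field_simp
    rw [div_eq_iff h₀_pos.ne']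
    linear_combination hA_eq
  have hvalue : B * h₀ ^ α = A ^ (α / (1 + α)) * B ^ (1 / (1 + α)) := by
    calc B * h₀ ^ α = B * (A / B) ^ (α / (1 + α)) := by
          rw [hh₀, ← Real.rpow_mul (by positivity)]
          ring_nf
      _ = A ^ (α / (1 + α)) * (B ^ (1 : ℝ) / B ^ (α / (1 + α))) := by
          rw [Real.div_rpow hA.le hB.le, Real.rpow_one]
          ring
      _ = A ^ (α / (1 + α)) * B ^ (1 / (1 + α)) := by
          rw [← Real.rpow_sub hB]
          congr 2
          field_simp
          ring
  have hmin : A / min L h₀ ≤ A / L + A / h₀ := by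
    have : 0 ≤ A / L := by positivity
    have : 0 ≤ A / h₀ := by positivity
    rcases min_choice L h₀ with h | h <;> rw [h] <;> linarith
  calc a ≤ A / min L h₀ + B * min L h₀ ^ α := hbound _ ⟨lt_min hL h₀_pos, min_le_left _ _⟩
    _ ≤ A / L + A / h₀ + B * h₀ ^ α := by gcongr; exact min_le_right _ _
    _ = A / L + 2 * A ^ (α / (1 + α)) * B ^ (1 / (1 + α)) := by rw [hbalance, hvalue]; ring

section HolderDerivative

variable {f f' : ℝ → ℝ} {a b S α : ℝ}

lemma abs_sub_sub_mul_le_of_holder (hα : 0 ≤ α) (hS : 0 ≤ S)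
    (hf : ∀ x ∈ Icc a b, HasDerivWithinAt f (f' x) (Icc a b) x)
    (hf' : ∀ x ∈ Icc a b, ∀ y ∈ Icc a b, |f' x - f' y| ≤ S * |x - y| ^ α)
    {t u : ℝ} (ht : t ∈ Icc a b) (hu : u ∈ Icc a b) :
    |f u - f t - f' t * (u - t)| ≤ S * |u - t| ^ α * |u - t| := by
  have hsub : uIcc t u ⊆ Icc a b := uIcc_subset_Icc ht hu
  have hg : ∀ x ∈ uIcc t u,
      HasDerivWithinAt (f - fun y => f' t * y) (f' x - f' t) (uIcc t u) x := fun x hx => by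
    simpa only [id_eq, mul_one] using
      ((hf x (hsub hx)).mono hsub).sub ((hasDerivWithinAt_id x _).const_mul (f' t))
  have hg' : ∀ x ∈ uIcc t u, ‖f' x - f' t‖ ≤ S * |u - t| ^ α := fun x hx =>
    (hf' x (hsub hx) t ht).trans <| mul_le_mul_of_nonneg_left
      (Real.rpow_le_rpow (abs_nonneg _) (abs_sub_left_of_mem_uIcc hx) hα) hS
  have hmvt := Convex.norm_image_sub_le_of_norm_hasDerivWithin_le hg hg' (convex_uIcc t u)
    left_mem_uIcc right_mem_uIcc
  simp only [Pi.sub_apply, Real.norm_eq_abs] at hmvt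
  convert hmvt using 2
  ring

lemma abs_deriv_le_of_holder {M : ℝ} (hα : 0 ≤ α) (hS : 0 ≤ S)
    (hf : ∀ x ∈ Icc a b, HasDerivWithinAt f (f' x) (Icc a b) x)
    (hf' : ∀ x ∈ Icc a b, ∀ y ∈ Icc a b, |f' x - f' y| ≤ S * |x - y| ^ α)
    (hM : ∀ x ∈ Icc a b, |f x| ≤ M) {t h : ℝ} (ht : t ∈ Icc a b) (h0 : 0 < h)
    (hh : h ≤ (b - a) / 2) :
    |f' t| ≤ 2 * M / h + S * h ^ α := by
  obtain ⟨u, hu, rfl⟩ := exists_mem_Icc_abs_sub_eq ht h0.le hh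
  have hmvt := abs_sub_sub_mul_le_of_holder hα hS hf hf' ht hu
  rw [div_add' _ _ _ h0.ne', le_div_iff₀ h0]
  calc |f' t| * |u - t| = |f' t * (u - t)| := (abs_mul _ _).symm
    _ = |(f u - f t) - (f u - f t - f' t * (u - t))| := by ring_nf
    _ ≤ |f u| + |f t| + |f u - f t - f' t * (u - t)| :=
      (abs_sub _ _).trans (add_le_add_left (abs_sub _ _) _)
    _ ≤ 2 * M + S * |u - t| ^ α * |u - t| := by linarith [hM u hu, hM t ht]

lemma abs_deriv_le_interpolation {M : ℝ} (hab : a < b) (hα : 0 < α)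
    (hM_nonneg : 0 ≤ M) (hS : 0 ≤ S)
    (hf : ∀ x ∈ Icc a b, HasDerivWithinAt f (f' x) (Icc a b) x)
    (hf' : ∀ x ∈ Icc a b, ∀ y ∈ Icc a b, |f' x - f' y| ≤ S * |x - y| ^ α)
    (hM : ∀ x ∈ Icc a b, |f x| ≤ M) {t : ℝ} (ht : t ∈ Icc a b) :
    |f' t| ≤ 4 / (b - a) * M + 4 * M ^ (α / (1 + α)) * S ^ (1 / (1 + α)) := by
  have hpt := le_of_forall_le_div_add_mul_rpow (half_pos (sub_pos.2 hab)) hα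
    (mul_nonneg zero_le_two hM_nonneg) hS fun h hh =>
      abs_deriv_le_of_holder hα.le hS hf hf' hM ht hh.1 hh.2
  have hhalf : 2 * M / ((b - a) / 2) = 4 / (b - a) * M := by field_simp; ring
  have htwo : (2 * M) ^ (α / (1 + α)) ≤ 2 * M ^ (α / (1 + α)) := by
    rw [Real.mul_rpow zero_le_two hM_nonneg]
    gcongr
    exact Real.rpow_le_self_of_one_le one_le_two (by rw [div_le_one (by positivity)]; linarith)
  rw [hhalf] at hpt
  linarith [mul_le_mul_of_nonneg_right htwo (Real.rpow_nonneg hS (1 / (1 + α)))]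

end HolderDerivative

theorem holder_interpolation_deriv_general
    (T α : ℝ) (hT : 0 < T) (hα0 : 0 < α)
    (f f' : ℝ → ℝ)
    (hderiv : ∀ t ∈ Icc (0:ℝ) T, HasDerivWithinAt f (f' t) (Icc (0:ℝ) T) t)
    (hHolder : ∃ H : ℝ, ∀ s ∈ Icc (0:ℝ) T, ∀ t ∈ Icc (0:ℝ) T,
      |f' s - f' t| ≤ H * |s - t| ^ α) :
    sSup ((fun t => |f' t|) '' Icc (0:ℝ) T) ≤
      8 / T * sSup ((fun t => |f t|) '' Icc (0:ℝ) T) +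
      8 * (sSup ((fun t => |f t|) '' Icc (0:ℝ) T)) ^ (α / (1 + α)) *
        (sSup ((fun t => |f' t|) '' Icc (0:ℝ) T) +
          sSup {q | ∃ s ∈ Icc (0:ℝ) T, ∃ t ∈ Icc (0:ℝ) T, s ≠ t ∧
            q = |f' s - f' t| / |s - t| ^ α}) ^ (1 / (1 + α)) := by
  obtain ⟨H, hH⟩ := hHolder
  set M₀ := sSup ((fun t => |f t|) '' Icc (0:ℝ) T)
  set M₁ := sSup ((fun t => |f' t|) '' Icc (0:ℝ) T)
  set S := holderSeminorm f' (Icc 0 T) α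
  have hf : ContinuousOn f (Icc 0 T) := fun t ht => (hderiv t ht).continuousWithinAt
  have hfM₀ : ∀ t ∈ Icc 0 T, |f t| ≤ M₀ := fun t ht =>
    le_csSup (isCompact_Icc.image_of_continuousOn hf.abs).bddAbove (mem_image_of_mem _ ht)
  have hM₀ : 0 ≤ M₀ := Real.sSup_nonneg (by rintro _ ⟨t, -, rfl⟩; exact abs_nonneg _)
  have hM₁ : 0 ≤ M₁ := Real.sSup_nonneg (by rintro _ ⟨t, -, rfl⟩; exact abs_nonneg _)
  have hS : 0 ≤ S := holderSeminorm_nonneg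
  refine csSup_le ((nonempty_Icc.2 hT.le).image _) ?_
  rintro _ ⟨t, ht, rfl⟩
  calc |f' t| ≤ 4 / (T - 0) * M₀ + 4 * M₀ ^ (α / (1 + α)) * S ^ (1 / (1 + α)) :=
        abs_deriv_le_interpolation hT hα0 hM₀ hS hderiv
          (fun x hx y hy => abs_sub_le_holderSeminorm_mul hH hx hy) hfM₀ ht
    _ ≤ 8 / T * M₀ + 8 * M₀ ^ (α / (1 + α)) * (M₁ + S) ^ (1 / (1 + α)) := by
        rw [sub_zero]
        gcongr <;> linarith

/-- **An interpolation inequality for Hölder-continuous derivatives.**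
If `f : [0,T] → ℝ` is differentiable with `α`-Hölder continuous derivative `f'`, then
`‖f'‖_{C⁰} ≤ (8/T) ‖f‖_{C⁰} + 8 ‖f‖_{C⁰}^{α/(1+α)} ‖f'‖_{C^α}^{1/(1+α)}`,
where `‖g‖_{C⁰} = sup_{[0,T]} |g|` and
`‖g‖_{C^α} = ‖g‖_{C⁰} + sup_{s ≠ t} |g(s) - g(t)|/|s - t|^α`. -/
theorem holder_interpolation_deriv
    (T α : ℝ) (hT : 0 < T) (hα0 : 0 < α) (hα1 : α ≤ 1)
    (f f' : ℝ → ℝ)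
    (hderiv : ∀ t ∈ Icc (0:ℝ) T, HasDerivWithinAt f (f' t) (Icc (0:ℝ) T) t)
    (hHolder : ∃ H : ℝ, ∀ s ∈ Icc (0:ℝ) T, ∀ t ∈ Icc (0:ℝ) T,
      |f' s - f' t| ≤ H * |s - t| ^ α) :
    sSup ((fun t => |f' t|) '' Icc (0:ℝ) T) ≤
      8 / T * sSup ((fun t => |f t|) '' Icc (0:ℝ) T) +
      8 * (sSup ((fun t => |f t|) '' Icc (0:ℝ) T)) ^ (α / (1 + α)) *
        (sSup ((fun t => |f' t|) '' Icc (0:ℝ) T) +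
          sSup {q | ∃ s ∈ Icc (0:ℝ) T, ∃ t ∈ Icc (0:ℝ) T, s ≠ t ∧
            q = |f' s - f' t| / |s - t| ^ α}) ^ (1 / (1 + α)) :=
  holder_interpolation_deriv_general T α hT hα0 f f' hderiv hHolder
end
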